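/- arXiv:1608.06758 — 6 statements merged into one kernel-verified Lean document; each statement's English description precedes it below -/
import Mathlib

section
/- There exists a constant C > 0 such that for all h ∈ (0,1] and all u ∈ ℝ: |χ_h(u)| ≤ (1/2)·|u|^β + C·h. -/
/-!
Split the integral at `|z| = ερ / h^(1/β)`. On the tail, `|cos − 1| ≤ 2` and `ρ` is bounded,
and the tail of `|z|^(-1-β)` contributes `O(h)`. On the bulk,
`|ρ(h^(1/β) z)| ≤ K h^(γ/β) |z|^γ` with `γ = min δ (β/2)`, and by scaling
`∫ (1 − cos uz) |z|^(-1-(β-γ)) dz = |u|^(β-γ) I`, where `I` is finite because `0 < β − γ < 2`.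
Hence `|χ_h(u)| ≤ C₁ h + A |u|^(β-γ) h^(γ/β)`, and Young's inequality with exponents
`β/(β-γ)` and `β/γ` absorbs the last term into `|u|^β / 2 + C₂ h`.
-/
open MeasureTheory Real Set Filter

theorem integrable_comp_abs_of_integrableOn_Ioi {f : ℝ → ℝ} (hf : IntegrableOn f (Ioi 0)) :
    Integrable (fun x => f |x|) := by
  have h_Ioi : IntegrableOn (fun x => f |x|) (Ioi 0) :=
    hf.congr_fun (fun x hx => by rw [abs_of_pos hx]) measurableSet_Ioi
  have h_Iic : IntegrableOn (fun x => f |x|) (Iic 0) := by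
    have hneg : MeasurableEmbedding fun x : ℝ => -x := (Homeomorph.neg ℝ).measurableEmbedding
    rw [← Measure.map_neg_eq_self (volume : Measure ℝ), hneg.integrableOn_map_iff]
    simp_rw [Function.comp_def, abs_neg, neg_preimage, neg_Iic, neg_zero]
    exact (integrableOn_Ici_iff_integrableOn_Ioi).2 h_Ioi
  simpa [Iic_union_Ioi] using h_Iic.union h_Ioi

theorem integrableOn_one_sub_cos_mul_rpow {α : ℝ} (hα0 : 0 < α) (hα2 : α < 2) :
    IntegrableOn (fun t => (1 - cos t) * t ^ (-(1 + α))) (Ioi 0) := by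
  have hmeas : AEStronglyMeasurable (fun t : ℝ => (1 - cos t) * t ^ (-(1 + α))) :=
    (by fun_prop : Measurable fun t : ℝ => (1 - cos t) * t ^ (-(1 + α))).aestronglyMeasurable
  have h_near : IntegrableOn (fun t => (1 - cos t) * t ^ (-(1 + α))) (Ioc 0 1) := by
    have hg : IntegrableOn (fun t : ℝ => 2⁻¹ * t ^ (1 - α)) (Ioc 0 1) :=
      ((intervalIntegrable_iff_integrableOn_Ioc_of_le zero_le_one).mp
        (intervalIntegral.intervalIntegrable_rpow' (by linarith))).const_mul _
    refine hg.mono' hmeas.restrict (ae_restrict_of_forall_mem measurableSet_Ioc fun t ht => ?_)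
    have ht0 : 0 < t := ht.1
    have hsplit : t ^ (1 - α) = t ^ 2 * t ^ (-(1 + α)) := by
      rw [← rpow_natCast, ← rpow_add ht0]; norm_num; ring_nf
    have hcos := one_sub_sq_div_two_le_cos (x := t)
    have hpow := rpow_pos_of_pos ht0 (-(1 + α))
    rw [Real.norm_eq_abs, abs_of_nonneg (by nlinarith [cos_le_one t]), hsplit]
    nlinarith
  have h_far : IntegrableOn (fun t => (1 - cos t) * t ^ (-(1 + α))) (Ioi 1) := by
    have hg : IntegrableOn (fun t : ℝ => 2 * t ^ (-(1 + α))) (Ioi 1) :=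
      (integrableOn_Ioi_rpow_of_lt (by linarith) zero_lt_one).const_mul _
    refine hg.mono' hmeas.restrict (ae_restrict_of_forall_mem measurableSet_Ioi fun t ht => ?_)
    have hpow := rpow_pos_of_pos (zero_lt_one.trans ht) (-(1 + α))
    rw [Real.norm_eq_abs, abs_of_nonneg (by nlinarith [cos_le_one t])]
    nlinarith [neg_one_le_cos t]
  simpa [Ioc_union_Ioi_eq_Ioi zero_le_one] using h_near.union h_far

theorem one_sub_cos_mul_mul_abs_rpow_eq {α u : ℝ} (hu : u ≠ 0) (z : ℝ) :
    (1 - cos (u * z)) * |z| ^ (-(1 + α)) =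
      |u| ^ (1 + α) * ((1 - cos (u * z)) * |u * z| ^ (-(1 + α))) := by
  have hu0 : 0 < |u| := abs_pos.mpr hu
  rw [abs_mul, mul_rpow hu0.le (abs_nonneg z), rpow_neg hu0.le]
  field_simp

theorem integrable_one_sub_cos_mul_abs_rpow {α : ℝ} (hα0 : 0 < α) (hα2 : α < 2) (u : ℝ) :
    Integrable (fun z => (1 - cos (u * z)) * |z| ^ (-(1 + α))) := by
  rcases eq_or_ne u 0 with rfl | hu
  · simp
  have h1 : Integrable (fun z => (1 - cos z) * |z| ^ (-(1 + α))) := by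
    simpa only [cos_abs] using
      integrable_comp_abs_of_integrableOn_Ioi (integrableOn_one_sub_cos_mul_rpow hα0 hα2)
  simpa only [one_sub_cos_mul_mul_abs_rpow_eq hu] using
    (h1.comp_mul_left' hu).const_mul (|u| ^ (1 + α))

theorem integral_one_sub_cos_mul_abs_rpow {α : ℝ} (hα : α ≠ 0) (u : ℝ) :
    ∫ z, (1 - cos (u * z)) * |z| ^ (-(1 + α)) =
      |u| ^ α * ∫ z, (1 - cos z) * |z| ^ (-(1 + α)) := by
  rcases eq_or_ne u 0 with rfl | hu
  · simp [zero_rpow hα]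
  simp_rw [one_sub_cos_mul_mul_abs_rpow_eq hu]
  rw [integral_const_mul, Measure.integral_comp_mul_left (fun z => (1 - cos z) * |z| ^ (-(1 + α))),
    smul_eq_mul, abs_inv, ← mul_assoc, rpow_add (abs_pos.mpr hu), rpow_one]
  field_simp

theorem integrable_and_integral_indicator_Ici_rpow_abs {β R : ℝ} (hβ : 0 < β) (hR : 0 < R) :
    Integrable (fun z => (Ici R).indicator (fun t => t ^ (-(1 + β))) |z|) ∧
      ∫ z, (Ici R).indicator (fun t => t ^ (-(1 + β))) |z| = 2 * (R ^ (-β) / β) := by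
  have hIoi : IntegrableOn (fun t : ℝ => t ^ (-(1 + β))) (Ioi R) :=
    integrableOn_Ioi_rpow_of_lt (by linarith) hR
  have hRpos : Ici R ⊆ Ioi 0 := fun t ht => hR.trans_le ht
  refine ⟨integrable_comp_abs_of_integrableOn_Ioi ?_, ?_⟩
  · exact (integrable_indicator_iff measurableSet_Ici).2
      ((integrableOn_Ici_iff_integrableOn_Ioi).2 hIoi) |>.integrableOn
  · rw [integral_comp_abs, setIntegral_indicator measurableSet_Ici, inter_eq_right.2 hRpos,
      integral_Ici_eq_integral_Ioi, integral_Ioi_rpow_of_lt (by linarith) hR]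
    congr 1
    rw [show -(1 + β) + 1 = -β by ring, neg_div_neg_eq]

theorem rpow_le_rpow_sub_mul_rpow {a b x ε : ℝ} (hx : 0 < x) (hxε : x ≤ ε) (hba : b ≤ a) :
    x ^ a ≤ ε ^ (a - b) * x ^ b := by
  rw [← sub_add_cancel a b, rpow_add hx, add_sub_cancel_right]
  gcongr

theorem abs_cos_sub_one_mul_mul_le {ρ : ℝ → ℝ} {M K β γ ε c u w z : ℝ}
    (hM : ∀ x, |ρ x| ≤ M) (hK0 : 0 ≤ K) (hK : ∀ x, x ≠ 0 → |x| ≤ ε → |ρ x| ≤ K * |x| ^ γ)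
    (hw : 0 < w) (hz : z ≠ 0) :
    |(cos (u * z) - 1) * ρ (w * z) * (c * |z| ^ (-(1 + β)))| ≤
      |c| * (2 * M * (Ici (ε / w)).indicator (fun t => t ^ (-(1 + β))) |z| +
        K * w ^ γ * ((1 - cos (u * z)) * |z| ^ (-(1 + (β - γ))))) := by
  have hz0 : 0 < |z| := abs_pos.mpr hz
  have hcos0 : 0 ≤ 1 - cos (u * z) := sub_nonneg.2 (cos_le_one _)
  have hcos2 : 1 - cos (u * z) ≤ 2 := by linarith [neg_one_le_cos (u * z)]
  have hM0 : 0 ≤ M := (abs_nonneg _).trans (hM 0)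
  rw [abs_mul, abs_mul, abs_mul, abs_sub_comm, abs_of_nonneg hcos0,
    abs_of_nonneg (rpow_nonneg hz0.le _)]
  by_cases hzR : |z| ∈ Ici (ε / w)
  · rw [indicator_of_mem hzR]
    have : 0 ≤ K * w ^ γ * ((1 - cos (u * z)) * |z| ^ (-(1 + (β - γ)))) := by positivity
    calc (1 - cos (u * z)) * |ρ (w * z)| * (|c| * |z| ^ (-(1 + β)))
        ≤ 2 * M * (|c| * |z| ^ (-(1 + β))) := by gcongr; exact hM _
      _ ≤ _ := by nlinarith [abs_nonneg c, rpow_nonneg hz0.le (-(1 + β))]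
  · rw [indicator_of_notMem hzR, mul_zero, zero_add]
    have hwz : |w * z| ≤ ε := by
      rw [abs_mul, abs_of_pos hw]
      rw [mem_Ici, not_le, lt_div_iff₀' hw] at hzR
      exact hzR.le
    have hρ : |ρ (w * z)| ≤ K * w ^ γ * |z| ^ γ := by
      have := hK _ (mul_ne_zero hw.ne' hz) hwz
      rwa [abs_mul, abs_of_pos hw, mul_rpow hw.le hz0.le, ← mul_assoc] at this
    have hexp : |z| ^ γ * |z| ^ (-(1 + β)) = |z| ^ (-(1 + (β - γ))) := by
      rw [← rpow_add hz0]; ring_nf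
    calc (1 - cos (u * z)) * |ρ (w * z)| * (|c| * |z| ^ (-(1 + β)))
        ≤ (1 - cos (u * z)) * (K * w ^ γ * |z| ^ γ) * (|c| * |z| ^ (-(1 + β))) := by gcongr
      _ = |c| * (K * w ^ γ * ((1 - cos (u * z)) * |z| ^ (-(1 + (β - γ))))) := by
        rw [← hexp]; ring

theorem abs_integral_cos_sub_one_mul_le {ρ : ℝ → ℝ} {M K β γ ε c w : ℝ} (hM : ∀ x, |ρ x| ≤ M)
    (hK0 : 0 ≤ K) (hK : ∀ x, x ≠ 0 → |x| ≤ ε → |ρ x| ≤ K * |x| ^ γ) (hβ : 0 < β)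
    (hγβ : γ < β) (hβγ : β - γ < 2) (hε : 0 < ε) (hw : 0 < w) (u : ℝ) :
    |∫ z, (cos (u * z) - 1) * ρ (w * z) * (c * |z| ^ (-(1 + β)))| ≤
      |c| * (2 * M * (2 * ((ε / w) ^ (-β) / β)) +
        K * w ^ γ * (|u| ^ (β - γ) * ∫ z, (1 - cos z) * |z| ^ (-(1 + (β - γ))))) := by
  obtain ⟨htail_int, htail⟩ :=
    integrable_and_integral_indicator_Ici_rpow_abs hβ (div_pos hε hw)
  have hbulk_int := integrable_one_sub_cos_mul_abs_rpow (sub_pos.2 hγβ) hβγ u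
  have hG_int :=
    ((htail_int.const_mul (2 * M)).add (hbulk_int.const_mul (K * w ^ γ))).const_mul |c|
  calc |∫ z, (cos (u * z) - 1) * ρ (w * z) * (c * |z| ^ (-(1 + β)))|
      ≤ ∫ z, |(cos (u * z) - 1) * ρ (w * z) * (c * |z| ^ (-(1 + β)))| :=
        abs_integral_le_integral_abs
    _ ≤ ∫ z, |c| * (2 * M * (Ici (ε / w)).indicator (fun t => t ^ (-(1 + β))) |z| +
          K * w ^ γ * ((1 - cos (u * z)) * |z| ^ (-(1 + (β - γ))))) :=
        integral_mono_of_nonneg (.of_forall fun _ => abs_nonneg _) hG_int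
          ((Measure.ae_ne volume 0).mono fun z hz => abs_cos_sub_one_mul_mul_le hM hK0 hK hw hz)
    _ = _ := by
      rw [integral_const_mul, integral_add (htail_int.const_mul _) (hbulk_int.const_mul _),
        integral_const_mul, integral_const_mul, htail,
        integral_one_sub_cos_mul_abs_rpow (sub_pos.2 hγβ).ne']

theorem exists_mul_rpow_mul_rpow_le_add {θ ε A : ℝ} (hθ0 : 0 < θ) (hθ1 : θ < 1) (hε : 0 < ε)
    (hA : 0 ≤ A) :
    ∃ C ≥ 0, ∀ x y : ℝ, 0 ≤ x → 0 ≤ y → A * x ^ (1 - θ) * y ^ θ ≤ ε * x + C * y := by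
  set a := ε / (1 - θ)
  have ha : 0 < a := div_pos hε (by linarith)
  set b := (A / a ^ (1 - θ)) ^ θ⁻¹
  have hb : 0 ≤ b := by positivity
  have hbθ : b ^ θ = A / a ^ (1 - θ) := by
    rw [← rpow_mul (by positivity), inv_mul_cancel₀ hθ0.ne', rpow_one]
  refine ⟨θ * b, by positivity, fun x y hx hy => ?_⟩
  -- `a` and `b` make the weighted AM-GM for `a x`, `b y` read `A x^(1-θ) y^θ ≤ ε x + θ b y`.
  have amgm := geom_mean_le_arith_mean2_weighted (sub_nonneg.2 hθ1.le) hθ0.le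
    (mul_nonneg ha.le hx) (mul_nonneg hb hy) (sub_add_cancel 1 θ)
  rw [mul_rpow ha.le hx, mul_rpow hb hy, hbθ] at amgm
  have ha' : a ^ (1 - θ) ≠ 0 := (rpow_pos_of_pos ha _).ne'
  calc A * x ^ (1 - θ) * y ^ θ = a ^ (1 - θ) * x ^ (1 - θ) * (A / a ^ (1 - θ) * y ^ θ) := by
        field_simp
    _ ≤ (1 - θ) * (a * x) + θ * (b * y) := amgm
    _ = ε * x + θ * b * y := by
        simp only [a]; field_simp [(by linarith : 1 - θ ≠ 0)]

theorem chi_h_bound_half_stable_general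
    (β cβ : ℝ) (hβ : β ∈ Set.Ioo (0:ℝ) 2)
    (ρ : ℝ → ℝ)
    (hρbdd : ∃ M : ℝ, ∀ z : ℝ, |ρ z| ≤ M)
    (δ cρ ερ : ℝ) (hδ : 0 < δ) (hcρ : 0 ≤ cρ) (hερ : 0 < ερ)
    (hρsmall : ∀ z : ℝ, z ≠ 0 → |z| ≤ ερ → |ρ z| ≤ cρ * |z| ^ δ)
    (χ : ℝ → ℝ → ℝ)
    (hχ : ∀ h ∈ Set.Ioc (0:ℝ) 1, ∀ u : ℝ,
      χ h u = ∫ z : ℝ, (Real.cos (u * z) - 1) * ρ (h ^ (1/β) * z) * (cβ * |z| ^ (-(1 + β)))) :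
    ∃ C > 0, ∀ h ∈ Set.Ioc (0:ℝ) 1, ∀ u : ℝ,
      |χ h u| ≤ (1/2) * |u| ^ β + C * h := by
  obtain ⟨hβ0, hβ2⟩ := hβ
  obtain ⟨M, hM⟩ := hρbdd
  have hM0 : 0 ≤ M := (abs_nonneg _).trans (hM 0)
  set γ := min δ (β / 2)
  have hγ0 : 0 < γ := lt_min hδ (by linarith)
  have hγβ : γ < β := (min_le_right _ _).trans_lt (by linarith)
  set K := cρ * ερ ^ (δ - γ)
  have hK : ∀ x, x ≠ 0 → |x| ≤ ερ → |ρ x| ≤ K * |x| ^ γ := fun x hx hxε => by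
    have hpow := rpow_le_rpow_sub_mul_rpow (abs_pos.2 hx) hxε (min_le_left δ (β / 2))
    calc |ρ x| ≤ cρ * |x| ^ δ := hρsmall x hx hxε
      _ ≤ K * |x| ^ γ := by rw [mul_assoc]; gcongr
  set I := ∫ z, (1 - cos z) * |z| ^ (-(1 + (β - γ)))
  have hI : 0 ≤ I := integral_nonneg fun z =>
    mul_nonneg (sub_nonneg.2 (cos_le_one z)) (rpow_nonneg (abs_nonneg z) _)
  obtain ⟨C, hC0, hC⟩ := exists_mul_rpow_mul_rpow_le_add (div_pos hγ0 hβ0)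
    ((div_lt_one hβ0).2 hγβ) one_half_pos (by positivity : 0 ≤ |cβ| * K * I)
  refine ⟨4 * |cβ| * M * ερ ^ (-β) / β + C + 1, by positivity, fun h hh u => ?_⟩
  have hw : 0 < h ^ (1 / β) := rpow_pos_of_pos hh.1 _
  have hR : (ερ / h ^ (1 / β)) ^ (-β) = ερ ^ (-β) * h := by
    rw [div_rpow hερ.le hw.le, ← rpow_mul hh.1.le, one_div_mul_eq_div, neg_div,
      div_self hβ0.ne', rpow_neg_one, div_inv_eq_mul]
  have hw_γ : (h ^ (1 / β)) ^ γ = h ^ (γ / β) := by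
    rw [← rpow_mul hh.1.le]; ring_nf
  have hu : |u| ^ (β - γ) = (|u| ^ β) ^ (1 - γ / β) := by
    rw [← rpow_mul (abs_nonneg u)]; congr 1; field_simp
  rw [hχ h hh u]
  calc _ ≤ _ :=
        abs_integral_cos_sub_one_mul_le hM (by positivity) hK hβ0 hγβ (by linarith) hερ hw u
    _ = 4 * |cβ| * M * ερ ^ (-β) / β * h +
          |cβ| * K * I * (|u| ^ β) ^ (1 - γ / β) * h ^ (γ / β) := by
      rw [hR, hw_γ, hu]; ring
    _ ≤ 4 * |cβ| * M * ερ ^ (-β) / β * h + (1 / 2 * |u| ^ β + C * h) := by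
      gcongr; exact hC _ _ (by positivity) hh.1.le
    _ ≤ 1 / 2 * |u| ^ β + (4 * |cβ| * M * ερ ^ (-β) / β + C + 1) * h := by nlinarith [hh.1]

/-- the perturbation `χ_h` of the log-characteristic function satisfies
`|χ_h(u)| ≤ (1/2)|u|^β + C h` uniformly in `h ∈ (0,1]` and `u ∈ ℝ`. -/
theorem chi_h_bound_half_stable
    (β cβ : ℝ) (hβ : β ∈ Set.Ioo (0:ℝ) 2)
    (hcβ : β ≠ 1 → cβ = (1/2) * ((1/β) * Real.Gamma (1 - β) * Real.cos (β * π / 2))⁻¹)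
    (hcβ1 : β = 1 → cβ = 1 / π)
    (ρ : ℝ → ℝ) (hρm : Measurable ρ)
    (hρbdd : ∃ M : ℝ, ∀ z : ℝ, |ρ z| ≤ M)
    (hρrange : ∀ z : ℝ, z ≠ 0 → -1 ≤ ρ z)
    (hρeven : ∀ z : ℝ, ρ (-z) = ρ z)
    (δ cρ ερ : ℝ) (hδ : 0 < δ) (hcρ : 0 ≤ cρ) (hερ : 0 < ερ)
    (hρsmall : ∀ z : ℝ, z ≠ 0 → |z| ≤ ερ → |ρ z| ≤ cρ * |z| ^ δ)
    (χ : ℝ → ℝ → ℝ)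
    (hχ : ∀ h ∈ Set.Ioc (0:ℝ) 1, ∀ u : ℝ,
      χ h u = ∫ z : ℝ, (Real.cos (u * z) - 1) * ρ (h ^ (1/β) * z) * (cβ * |z| ^ (-(1 + β)))) :
    ∃ C > 0, ∀ h ∈ Set.Ioc (0:ℝ) 1, ∀ u : ℝ,
      |χ h u| ≤ (1/2) * |u| ^ β + C * h :=
  chi_h_bound_half_stable_general β cβ hβ ρ hρbdd δ cρ ερ hδ hcρ hερ hρsmall χ hχ
end

section
/- There exists a constant C > 0 such that for all w > 0: | ∫_0^K sin(w·x) · x^{−β} · ρ(x) dx | ≤ C/w. -/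
/-!
Integrate by parts against `-cos (w x) / w`, an antiderivative of `sin (w x)` bounded by
`1 / w`. For `g x = x ^ (-β) * ρ x` the growth condition on `ρ` gives
`|g x| ≤ cρ x ^ (δ - β)`, so `g` extends continuously by `g 0 = 0`, and
`|g' x| ≤ (β + 1) cρ x ^ (δ - β - 1)`, which is integrable at `0` because `δ > β`.
Both boundary terms and the remaining integral are therefore `O(1 / w)`.
-/

open MeasureTheory Real Set Filter
open scoped Topology

theorem abs_neg_cos_div_le {w : ℝ} (hw : 0 < w) (x : ℝ) : |-cos (w * x) / w| ≤ 1 / w := by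
  rw [abs_div, abs_neg, abs_of_pos hw]
  gcongr
  exact abs_cos_le_one _

theorem abs_integral_sin_mul_le {g g' : ℝ → ℝ} {a b w : ℝ} (hab : a ≤ b) (hw : 0 < w)
    (hg : ContinuousOn g (Icc a b)) (hgg' : ∀ x ∈ Ioo a b, HasDerivAt g (g' x) x)
    (hg' : IntervalIntegrable g' volume a b) :
    |∫ x in a..b, sin (w * x) * g x| ≤ (|g a| + |g b| + ∫ x in a..b, |g' x|) / w := by
  set v : ℝ → ℝ := fun x ↦ -cos (w * x) / w
  have hv (x : ℝ) : HasDerivAt v (sin (w * x)) x :=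
    (((hasDerivAt_id x).const_mul w).cos.neg.div_const w).congr_deriv <| by
      simp only [id, mul_one, neg_mul, neg_neg]
      field_simp
  have hparts : ∫ x in a..b, g x * sin (w * x)
      = g b * v b - g a * v a - ∫ x in a..b, g' x * v x :=
    intervalIntegral.integral_mul_deriv_eq_deriv_mul_of_hasDerivAt
      (by rwa [uIcc_of_le hab]) (fun x _ ↦ (hv x).continuousAt.continuousWithinAt)
      (by simpa [hab] using hgg') (fun x _ ↦ hv x) hg'
      (Continuous.intervalIntegrable (by fun_prop) _ _)
  have hint : |∫ x in a..b, g' x * v x| ≤ (∫ x in a..b, |g' x|) / w := by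
    rw [← intervalIntegral.integral_div]
    refine intervalIntegral.abs_integral_le_integral_abs hab |>.trans <|
      intervalIntegral.integral_mono_on hab ?_ (hg'.abs.div_const w) fun x _ ↦ ?_
    · exact (hg'.mul_continuousOn (fun x _ ↦ (hv x).continuousAt.continuousWithinAt)).abs
    · rw [abs_mul, div_eq_mul_one_div]
      exact mul_le_mul_of_nonneg_left (abs_neg_cos_div_le hw x) (abs_nonneg _)
  have hend : ∀ x, |g x * v x| ≤ |g x| / w := fun x ↦ by
    rw [abs_mul, div_eq_mul_one_div]
    exact mul_le_mul_of_nonneg_left (abs_neg_cos_div_le hw x) (abs_nonneg _)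
  simp_rw [mul_comm (sin _), hparts]
  calc |g b * v b - g a * v a - ∫ x in a..b, g' x * v x|
      ≤ |g b * v b| + |g a * v a| + |∫ x in a..b, g' x * v x| :=
        (abs_sub _ _).trans (add_le_add_left (abs_sub _ _) _)
    _ ≤ |g b| / w + |g a| / w + (∫ x in a..b, |g' x|) / w := by
        gcongr
        exacts [hend b, hend a]
    _ = (|g a| + |g b| + ∫ x in a..b, |g' x|) / w := by ring

theorem continuousWithinAt_zero_of_abs_le_rpow {g : ℝ → ℝ} {C γ : ℝ} (hγ : 0 < γ)
    (hg0 : g 0 = 0) (hg : ∀ x, 0 < x → |g x| ≤ C * x ^ γ) :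
    ContinuousWithinAt g (Ici 0) 0 := by
  have hlim : Tendsto (fun x : ℝ ↦ C * x ^ γ) (𝓝[≥] 0) (𝓝 0) := by
    simpa [zero_rpow hγ.ne'] using
      ((continuousAt_rpow_const 0 γ (Or.inr hγ.le)).const_mul C).mono_left nhdsWithin_le_nhds
  rw [ContinuousWithinAt, hg0]
  refine squeeze_zero_norm' ?_ hlim
  filter_upwards [self_mem_nhdsWithin] with x (hx : 0 ≤ x)
  rcases hx.eq_or_lt with rfl | hx
  · simp [hg0, zero_rpow hγ.ne']
  · exact hg x hx

theorem integral_abs_le_of_abs_le_rpow {f : ℝ → ℝ} {C γ K : ℝ} (hγ : 0 < γ)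
    (hK : 0 ≤ K) (hf : AEStronglyMeasurable f (volume.restrict (Ioc 0 K)))
    (hb : ∀ x ∈ Ioc 0 K, |f x| ≤ C * x ^ (γ - 1)) :
    IntervalIntegrable f volume 0 K ∧ ∫ x in 0..K, |f x| ≤ C * K ^ γ / γ := by
  have hdom : IntervalIntegrable (fun x ↦ C * x ^ (γ - 1)) volume 0 K :=
    (intervalIntegral.intervalIntegrable_rpow' (by linarith)).const_mul C
  have hfint : IntervalIntegrable f volume 0 K := by
    rw [intervalIntegrable_iff_integrableOn_Ioc_of_le hK] at hdom ⊢
    exact hdom.mono' hf ((ae_restrict_mem measurableSet_Ioc).mono hb)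
  refine ⟨hfint, ?_⟩
  calc ∫ x in 0..K, |f x| ≤ ∫ x in 0..K, C * x ^ (γ - 1) :=
        intervalIntegral.integral_mono_on_of_le_Ioo hK hfint.abs hdom
          fun x hx ↦ hb x (Ioo_subset_Ioc_self hx)
    _ = C * K ^ γ / γ := by
        rw [intervalIntegral.integral_const_mul, integral_rpow (Or.inl (by linarith))]
        simp [zero_rpow hγ.ne', mul_div_assoc]

section

variable {β δ cρ : ℝ} {ρ ρ' : ℝ → ℝ}

theorem abs_rpow_neg_mul_le (hb : ∀ x, 0 < x → |ρ x| + x * |ρ' x| ≤ cρ * x ^ δ) {x : ℝ}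
    (hx : 0 < x) : |x ^ (-β) * ρ x| ≤ cρ * x ^ (δ - β) := by
  rw [abs_mul, abs_of_nonneg (rpow_nonneg hx.le _), sub_eq_add_neg, rpow_add hx]
  calc x ^ (-β) * |ρ x| ≤ x ^ (-β) * (cρ * x ^ δ) := by
        gcongr
        linarith [hb x hx, mul_nonneg hx.le (abs_nonneg (ρ' x))]
    _ = cρ * (x ^ δ * x ^ (-β)) := by ring

theorem abs_rpow_neg_mul_deriv_le (hβ : 0 ≤ β)
    (hb : ∀ x, 0 < x → |ρ x| + x * |ρ' x| ≤ cρ * x ^ δ) {x : ℝ} (hx : 0 < x) :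
    |-β * x ^ (-β - 1) * ρ x + x ^ (-β) * ρ' x| ≤ (β + 1) * cρ * x ^ (δ - β - 1) := by
  have hpow : 0 ≤ x ^ (-β - 1) := rpow_nonneg hx.le _
  have hsplit : x ^ (-β) = x ^ (-β - 1) * x := by
    rw [← rpow_add_one hx.ne']; ring_nf
  calc |-β * x ^ (-β - 1) * ρ x + x ^ (-β) * ρ' x|
      ≤ x ^ (-β - 1) * (β * |ρ x| + x * |ρ' x|) := by
        refine (abs_add_le _ _).trans_eq ?_
        rw [hsplit, abs_mul, abs_mul, abs_mul, abs_mul, abs_neg, abs_of_nonneg hβ,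
          abs_of_nonneg hpow, abs_of_pos hx]
        ring
    _ ≤ x ^ (-β - 1) * ((β + 1) * (cρ * x ^ δ)) := by
        gcongr
        nlinarith [hb x hx, abs_nonneg (ρ x), mul_nonneg hx.le (abs_nonneg (ρ' x))]
    _ = (β + 1) * cρ * x ^ (δ - β - 1) := by
        rw [show δ - β - 1 = δ + (-β - 1) by ring, rpow_add hx]; ring

theorem hasDerivAt_rpow_neg_mul (hdiff : ∀ x, 0 < x → HasDerivAt ρ (ρ' x) x) {x : ℝ}
    (hx : 0 < x) :
    HasDerivAt (fun x ↦ x ^ (-β) * ρ x) (-β * x ^ (-β - 1) * ρ x + x ^ (-β) * ρ' x) x :=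
  (hasDerivAt_rpow_const (Or.inl hx.ne')).mul (hdiff x hx)

theorem continuousOn_rpow_neg_mul (hβ : 0 < β) (hδ : β < δ)
    (hdiff : ∀ x, 0 < x → HasDerivAt ρ (ρ' x) x)
    (hb : ∀ x, 0 < x → |ρ x| + x * |ρ' x| ≤ cρ * x ^ δ) :
    ContinuousOn (fun x ↦ x ^ (-β) * ρ x) (Ici 0) := by
  intro x (hx : 0 ≤ x)
  rcases hx.eq_or_lt with rfl | hx
  · exact continuousWithinAt_zero_of_abs_le_rpow (sub_pos.2 hδ)
      (by simp [zero_rpow (neg_ne_zero.2 hβ.ne')]) fun x hx ↦ abs_rpow_neg_mul_le hb hx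
  · exact (hasDerivAt_rpow_neg_mul hdiff hx).continuousAt.continuousWithinAt

end

theorem oscillatory_integral_rho_bound_general
    (β δ cρ K : ℝ) (hβ : β ∈ Set.Ioo (0:ℝ) 2) (hδ : β < δ) (hcρ : 0 < cρ) (hK : 0 < K)
    (ρ ρ' : ℝ → ℝ)
    (hdiff : ∀ x : ℝ, 0 < x → HasDerivAt ρ (ρ' x) x)
    (hbound : ∀ x : ℝ, 0 < x → |ρ x| + x * |ρ' x| ≤ cρ * x ^ δ) :
    ∃ C > 0, ∀ w : ℝ, 0 < w →
      |∫ x in Set.Ioc (0:ℝ) K, Real.sin (w * x) * x ^ (-β) * ρ x| ≤ C / w := by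
  obtain ⟨hβ0, -⟩ := hβ
  have hγ : 0 < δ - β := sub_pos.2 hδ
  set g : ℝ → ℝ := fun x ↦ x ^ (-β) * ρ x
  set g' : ℝ → ℝ := fun x ↦ -β * x ^ (-β - 1) * ρ x + x ^ (-β) * ρ' x
  have hg0 : g 0 = 0 := by simp [g, zero_rpow (neg_ne_zero.2 hβ0.ne')]
  -- `g'` is measurable because it agrees with `deriv g` on `(0, K]`.
  have hg'meas : AEStronglyMeasurable g' (volume.restrict (Ioc 0 K)) :=
    (aestronglyMeasurable_deriv g _).congr <| (ae_restrict_mem measurableSet_Ioc).mono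
      fun x hx ↦ (hasDerivAt_rpow_neg_mul hdiff hx.1).deriv
  obtain ⟨hg'int, hg'bound⟩ := integral_abs_le_of_abs_le_rpow hγ hK.le hg'meas
    fun x hx ↦ abs_rpow_neg_mul_deriv_le hβ0.le hbound hx.1
  refine ⟨cρ * K ^ (δ - β) * (1 + (β + 1) / (δ - β)),
    mul_pos (mul_pos hcρ (rpow_pos_of_pos hK _)) (by positivity), fun w hw ↦ ?_⟩
  calc |∫ x in Ioc 0 K, sin (w * x) * x ^ (-β) * ρ x| = |∫ x in 0..K, sin (w * x) * g x| := by
        simp only [intervalIntegral.integral_of_le hK.le, g, mul_assoc]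
    _ ≤ (|g 0| + |g K| + ∫ x in 0..K, |g' x|) / w :=
        abs_integral_sin_mul_le hK.le hw
          ((continuousOn_rpow_neg_mul hβ0 hδ hdiff hbound).mono Icc_subset_Ici_self)
          (fun x hx ↦ hasDerivAt_rpow_neg_mul hdiff hx.1) hg'int
    _ ≤ (0 + cρ * K ^ (δ - β) + (β + 1) * cρ * K ^ (δ - β) / (δ - β)) / w := by
        gcongr
        · rw [hg0, abs_zero]
        · exact abs_rpow_neg_mul_le hbound hK
    _ = cρ * K ^ (δ - β) * (1 + (β + 1) / (δ - β)) / w := by ring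

/-- oscillatory-integral bound `|∫_0^K sin(wx) x^{-β} ρ(x) dx| ≤ C/w`. -/
theorem oscillatory_integral_rho_bound
    (β δ cρ K : ℝ) (hβ : β ∈ Set.Ioo (0:ℝ) 2) (hδ : β < δ) (hcρ : 0 < cρ) (hK : 0 < K)
    (ρ ρ' : ℝ → ℝ)
    (hdiff : ∀ x : ℝ, 0 < x → HasDerivAt ρ (ρ' x) x)
    (hcont : ContinuousOn ρ' (Set.Ioi (0:ℝ)))
    (hbound : ∀ x : ℝ, 0 < x → |ρ x| + x * |ρ' x| ≤ cρ * x ^ δ) :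
    ∃ C > 0, ∀ w : ℝ, 0 < w →
      |∫ x in Set.Ioc (0:ℝ) K, Real.sin (w * x) * x ^ (-β) * ρ x| ≤ C / w :=
  oscillatory_integral_rho_bound_general β δ cρ K hβ hδ hcρ hK ρ ρ' hdiff hbound
end

section
/- For each β ∈ (0,2) there exists a constant C > 0 such that for all R > 0: | ∫_0^R (sin x)·x^{−β} dx − β/(2·c_β) | ≤ C·R^{−β}. In particular ∫_0^∞ (sin x)·x^{−β} dx = β/(2·c_β), which equals Γ(1−β)·cos(βπ/2) for β ≠ 1 and π/2 for β = 1. -/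
/-!
Since `Γ(β) x^(-β) = ∫_0^∞ t^(β-1) e^(-xt) dt`, exchanging the order of integration gives
`Γ(β) ∫_0^R sin x x^(-β) dx = ∫_0^∞ t^(β-1) (1 - e^(-tR) (t sin R + cos R)) / (1 + t²) dt`.
The main term is `∫_0^∞ t^(β-1) / (1 + t²) dt = π / (2 sin (πβ/2))`, which after `u = t²` is
the Beta integral `∫_0^∞ u^(a-1) / (1 + u) du = Γ(a) Γ(1-a)` (Fubini against `e^(-(1+u)s)`)
combined with the reflection formula. As `|t sin R + cos R| ≤ 1 + t²`, the remainder is at most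
`∫_0^∞ t^(β-1) e^(-tR) dt = Γ(β) R^(-β)`, so `C = 1` works. Finally, the reflection formula and
`sin (πβ) = 2 sin (πβ/2) cos (πβ/2)` turn `π / (2 sin (πβ/2) Γ(β))` into `Γ(1-β) cos (βπ/2)`.
-/

open MeasureTheory Real Set Filter

lemma integrableOn_rpow_mul_exp_neg_mul {β x : ℝ} (hβ : 0 < β) (hx : 0 < x) :
    IntegrableOn (fun t => t ^ (β - 1) * exp (-(x * t))) (Ioi 0) := by
  simpa using integrableOn_rpow_mul_exp_neg_mul_rpow (p := 1) (by linarith) one_pos hx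

lemma integral_rpow_mul_exp_neg_mul {β x : ℝ} (hβ : 0 < β) (hx : 0 < x) :
    ∫ t in Ioi 0, t ^ (β - 1) * exp (-(x * t)) = Gamma β * x ^ (-β) := by
  rw [integral_rpow_mul_exp_neg_mul_Ioi hβ hx, one_div, inv_rpow hx.le, rpow_neg hx.le, mul_comm]

lemma integral_sin_mul_exp_neg_mul (t R : ℝ) :
    ∫ x in (0 : ℝ)..R, sin x * exp (-(t * x)) =
      (1 - exp (-(t * R)) * (t * sin R + cos R)) / (1 + t ^ 2) := by
  have hF : ∀ x ∈ uIcc 0 R, HasDerivAt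
      (fun y => -(exp (-(t * y)) * (t * sin y + cos y)) / (1 + t ^ 2))
      (sin x * exp (-(t * x))) x := by
    intro x _
    have hexp : HasDerivAt (fun y => exp (-(t * y))) (exp (-(t * x)) * -t) x := by
      simpa using ((hasDerivAt_id x).const_mul t).neg.exp
    refine ((hexp.mul (((hasDerivAt_sin x).const_mul t).add (hasDerivAt_cos x))).neg.div_const
      (1 + t ^ 2)).congr_deriv ?_
    rw [div_eq_iff (by positivity), Pi.add_apply]
    ring
  rw [intervalIntegral.integral_eq_sub_of_hasDerivAt hF
    (by apply Continuous.intervalIntegrable; fun_prop)]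
  simp only [mul_zero, neg_zero, exp_zero, sin_zero, cos_zero, zero_add, mul_one]
  ring

lemma integrableOn_sin_mul_rpow_neg {β R : ℝ} (hβ : β < 2) (hR : 0 ≤ R) :
    IntegrableOn (fun x => sin x * x ^ (-β)) (Ioc 0 R) := by
  have hdom : IntegrableOn (fun x : ℝ => x ^ (1 - β)) (Ioc 0 R) := by
    rw [← intervalIntegrable_iff_integrableOn_Ioc_of_le hR]
    exact intervalIntegral.intervalIntegrable_rpow' (by linarith)
  refine hdom.mono' (by fun_prop) ?_
  filter_upwards [ae_restrict_mem measurableSet_Ioc] with x hx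
  have hx : 0 < x := hx.1
  calc ‖sin x * x ^ (-β)‖ = |sin x| * x ^ (-β) := by
        rw [norm_mul, norm_eq_abs, norm_of_nonneg (by positivity)]
    _ ≤ x * x ^ (-β) := by gcongr; simpa [abs_of_pos hx] using abs_sin_le_abs (x := x)
    _ = x ^ (1 - β) := by rw [sub_eq_add_neg, rpow_add hx, rpow_one]

lemma integrableOn_rpow_div_one_add {a : ℝ} (ha0 : 0 < a) (ha1 : a < 1) :
    IntegrableOn (fun u : ℝ => u ^ (a - 1) / (1 + u)) (Ioi 0) := by
  have hmeas : Measurable fun u : ℝ => u ^ (a - 1) / (1 + u) := by fun_prop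
  rw [← Ioc_union_Ioi_eq_Ioi zero_le_one, integrableOn_union]
  constructor
  · have hdom : IntegrableOn (fun u : ℝ => u ^ (a - 1)) (Ioc 0 1) := by
      rw [← intervalIntegrable_iff_integrableOn_Ioc_of_le zero_le_one]
      exact intervalIntegral.intervalIntegrable_rpow' (by linarith)
    refine hdom.mono' hmeas.aestronglyMeasurable ?_
    filter_upwards [ae_restrict_mem measurableSet_Ioc] with u hu
    have hu : 0 < u := hu.1
    rw [norm_of_nonneg (by positivity)]
    exact div_le_self (by positivity) (by linarith)
  · refine (integrableOn_Ioi_rpow_of_lt (by linarith : a - 2 < -1) one_pos).mono'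
      hmeas.aestronglyMeasurable ?_
    filter_upwards [ae_restrict_mem measurableSet_Ioi] with u (hu : 1 < u)
    have hu0 : 0 < u := by linarith
    rw [norm_of_nonneg (by positivity), div_le_iff₀ (by positivity)]
    calc u ^ (a - 1) = u ^ (a - 2) * u := by
          rw [← rpow_add_one hu0.ne']; ring_nf
      _ ≤ u ^ (a - 2) * (1 + u) := by gcongr; linarith

lemma integral_rpow_div_one_add {a : ℝ} (ha0 : 0 < a) (ha1 : a < 1) :
    ∫ u in Ioi 0, u ^ (a - 1) / (1 + u) = π / sin (π * a) := by
  set F : ℝ → ℝ → ℝ := fun u s => u ^ (a - 1) * exp (-(1 + u) * s)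
  have hF_ds : ∀ u ∈ Ioi (0 : ℝ), ∫ s in Ioi 0, F u s = u ^ (a - 1) / (1 + u) := by
    intro u (hu : 0 < u)
    rw [integral_const_mul, integral_exp_mul_Ioi (by linarith), mul_zero, exp_zero,
      neg_div_neg_eq, mul_one_div]
  have hF_du : ∀ s ∈ Ioi (0 : ℝ),
      ∫ u in Ioi 0, F u s = Gamma a * (s ^ ((1 - a) - 1) * exp (-(1 * s))) := by
    intro s (hs : 0 < s)
    have hF : ∀ u, F u s = exp (-s) * (u ^ (a - 1) * exp (-(s * u))) := fun u => by
      simp only [F]; rw [show -(1 + u) * s = -s + -(s * u) by ring, exp_add]; ring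
    simp_rw [hF]
    rw [integral_const_mul, integral_rpow_mul_exp_neg_mul ha0 hs, sub_sub_cancel_left, one_mul]
    ring
  have hF_int : Integrable (Function.uncurry F)
      ((volume.restrict (Ioi 0)).prod (volume.restrict (Ioi 0))) := by
    rw [integrable_prod_iff (by unfold F; fun_prop)]
    constructor
    · filter_upwards [ae_restrict_mem measurableSet_Ioi] with u (hu : 0 < u)
      simpa [F, neg_mul] using (exp_neg_integrableOn_Ioi 0 (by linarith : 0 < 1 + u)).const_mul
        (u ^ (a - 1))
    · refine (integrableOn_rpow_div_one_add ha0 ha1).congr_fun_ae ?_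
      filter_upwards [ae_restrict_mem measurableSet_Ioi] with u (hu : 0 < u)
      rw [← hF_ds u hu]
      congr 1 with s
      exact (norm_of_nonneg (by positivity)).symm
  rw [← setIntegral_congr_fun measurableSet_Ioi hF_ds, integral_integral_swap hF_int,
    setIntegral_congr_fun measurableSet_Ioi hF_du, integral_const_mul,
    integral_rpow_mul_exp_neg_mul (by linarith) one_pos, one_rpow, mul_one,
    Gamma_mul_Gamma_one_sub]

lemma rpow_sub_one_smul_rpow_div_one_add_rpow_two {β t : ℝ} (ht : 0 < t) :
    t ^ ((2 : ℝ) - 1) • ((t ^ (2 : ℝ)) ^ (β / 2 - 1) / (1 + t ^ (2 : ℝ))) =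
      t ^ (β - 1) / (1 + t ^ 2) := by
  rw [smul_eq_mul, ← rpow_mul ht.le, ← mul_div_assoc, ← rpow_add ht, rpow_two]
  ring_nf

lemma integrableOn_rpow_div_one_add_sq {β : ℝ} (h0 : 0 < β) (h2 : β < 2) :
    IntegrableOn (fun t : ℝ => t ^ (β - 1) / (1 + t ^ 2)) (Ioi 0) := by
  refine ((integrableOn_Ioi_comp_rpow_iff' _ two_ne_zero).mpr
    (integrableOn_rpow_div_one_add (a := β / 2) (by linarith) (by linarith))).congr_fun
    (fun t ht => rpow_sub_one_smul_rpow_div_one_add_rpow_two ht) measurableSet_Ioi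

lemma integral_rpow_div_one_add_sq {β : ℝ} (h0 : 0 < β) (h2 : β < 2) :
    ∫ t in Ioi 0, t ^ (β - 1) / (1 + t ^ 2) = π / (2 * sin (π * (β / 2))) := by
  have h := integral_comp_rpow_Ioi_of_pos (g := fun u : ℝ => u ^ (β / 2 - 1) / (1 + u)) two_pos
  simp_rw [mul_smul] at h
  rw [setIntegral_congr_fun measurableSet_Ioi
    (fun t ht => by rw [rpow_sub_one_smul_rpow_div_one_add_rpow_two ht]), integral_smul,
    smul_eq_mul, integral_rpow_div_one_add (by linarith) (by linarith)] at h
  rw [mul_comm 2, ← div_div, ← h]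
  ring

lemma gamma_mul_integral_sin_mul_rpow_neg {β R : ℝ} (h0 : 0 < β) (h2 : β < 2) (hR : 0 ≤ R) :
    Gamma β * ∫ x in Ioc 0 R, sin x * x ^ (-β) =
      ∫ t in Ioi 0, t ^ (β - 1) * ((1 - exp (-(t * R)) * (t * sin R + cos R)) / (1 + t ^ 2)) := by
  set F : ℝ → ℝ → ℝ := fun x t => sin x * (t ^ (β - 1) * exp (-(x * t)))
  have hF_dt : ∀ x ∈ Ioc 0 R, ∫ t in Ioi 0, F x t = Gamma β * (sin x * x ^ (-β)) := by
    intro x hx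
    rw [integral_const_mul, integral_rpow_mul_exp_neg_mul h0 hx.1]
    ring
  have hF_dx : ∀ t ∈ Ioi (0 : ℝ), ∫ x in Ioc 0 R, F x t =
      t ^ (β - 1) * ((1 - exp (-(t * R)) * (t * sin R + cos R)) / (1 + t ^ 2)) := by
    intro t _
    rw [← integral_sin_mul_exp_neg_mul, intervalIntegral.integral_of_le hR, ← integral_const_mul]
    congr 1 with x
    simp only [F, mul_comm x t]
    ring
  have hF_int : Integrable (Function.uncurry F)
      ((volume.restrict (Ioc 0 R)).prod (volume.restrict (Ioi 0))) := by
    rw [integrable_prod_iff (by unfold F; fun_prop)]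
    constructor
    · filter_upwards [ae_restrict_mem measurableSet_Ioc] with x hx
      exact (integrableOn_rpow_mul_exp_neg_mul h0 hx.1).const_mul (sin x)
    · refine ((integrableOn_sin_mul_rpow_neg h2 hR).norm.const_mul (Gamma β)).congr ?_
      filter_upwards [ae_restrict_mem measurableSet_Ioc] with x hx
      have hnorm : ∀ t ∈ Ioi (0 : ℝ), ‖F x t‖ = |sin x| * (t ^ (β - 1) * exp (-(x * t))) :=
        fun t (ht : 0 < t) => by
          simp only [F, norm_mul, norm_eq_abs, abs_of_pos (exp_pos _),
            abs_of_nonneg (rpow_nonneg ht.le _)]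
      have hx0 : 0 < x := hx.1
      simp only [Function.uncurry_apply_pair]
      rw [setIntegral_congr_fun measurableSet_Ioi hnorm, integral_const_mul,
        integral_rpow_mul_exp_neg_mul h0 hx0, norm_mul, norm_eq_abs,
        norm_of_nonneg (rpow_nonneg hx0.le _)]
      ring
  rw [← integral_const_mul, ← setIntegral_congr_fun measurableSet_Ioc hF_dt,
    integral_integral_swap hF_int, setIntegral_congr_fun measurableSet_Ioi hF_dx]

-- `(t sin R + cos R)² + (t cos R - sin R)² = 1 + t²`
lemma abs_mul_sin_add_cos_le (t R : ℝ) : |t * sin R + cos R| ≤ 1 + t ^ 2 :=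
  abs_le_of_sq_le_sq
    (by nlinarith [sin_sq_add_cos_sq R, sq_nonneg (t * cos R - sin R), sq_nonneg t])
    (by positivity)

lemma norm_rpow_mul_exp_mul_sin_add_cos_div_le {β R t : ℝ} (ht : 0 < t) :
    ‖t ^ (β - 1) * (exp (-(t * R)) * (t * sin R + cos R) / (1 + t ^ 2))‖ ≤
      t ^ (β - 1) * exp (-(R * t)) := by
  rw [norm_mul, norm_div, norm_mul, norm_of_nonneg (rpow_nonneg ht.le _),
    norm_of_nonneg (exp_pos _).le, norm_of_nonneg (by positivity : (0 : ℝ) ≤ 1 + t ^ 2),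
    mul_comm t R, mul_div_assoc]
  gcongr
  exact mul_le_of_le_one_right (exp_pos _).le
    (div_le_one_of_le₀ (abs_mul_sin_add_cos_le t R) (by positivity))

lemma integrableOn_rpow_mul_exp_mul_sin_add_cos_div {β R : ℝ} (h0 : 0 < β) (hR : 0 < R) :
    IntegrableOn (fun t => t ^ (β - 1) * (exp (-(t * R)) * (t * sin R + cos R) / (1 + t ^ 2)))
      (Ioi 0) :=
  (integrableOn_rpow_mul_exp_neg_mul h0 hR).mono' (by fun_prop) <|
    (ae_restrict_mem measurableSet_Ioi).mono fun _ ht =>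
      norm_rpow_mul_exp_mul_sin_add_cos_div_le ht

lemma abs_integral_rpow_mul_exp_mul_sin_add_cos_div_le {β R : ℝ} (h0 : 0 < β) (hR : 0 < R) :
    |∫ t in Ioi 0, t ^ (β - 1) * (exp (-(t * R)) * (t * sin R + cos R) / (1 + t ^ 2))| ≤
      Gamma β * R ^ (-β) := by
  rw [← integral_rpow_mul_exp_neg_mul h0 hR, ← norm_eq_abs]
  exact norm_integral_le_of_norm_le (integrableOn_rpow_mul_exp_neg_mul h0 hR)
    ((ae_restrict_mem measurableSet_Ioi).mono fun _ ht =>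
      norm_rpow_mul_exp_mul_sin_add_cos_div_le ht)

lemma abs_integral_sin_mul_rpow_neg_sub_le {β R : ℝ} (h0 : 0 < β) (h2 : β < 2) (hR : 0 < R) :
    |(∫ x in Ioc 0 R, sin x * x ^ (-β)) - π / (2 * sin (π * (β / 2)) * Gamma β)| ≤ R ^ (-β) := by
  have hΓ : 0 < Gamma β := Gamma_pos_of_pos h0
  set E := ∫ t in Ioi 0, t ^ (β - 1) * (exp (-(t * R)) * (t * sin R + cos R) / (1 + t ^ 2))
  have hsplit : Gamma β * ∫ x in Ioc 0 R, sin x * x ^ (-β) = π / (2 * sin (π * (β / 2))) - E := by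
    rw [gamma_mul_integral_sin_mul_rpow_neg h0 h2 hR.le, ← integral_rpow_div_one_add_sq h0 h2,
      ← integral_sub (integrableOn_rpow_div_one_add_sq h0 h2)
        (integrableOn_rpow_mul_exp_mul_sin_add_cos_div h0 hR)]
    congr 1 with t
    ring
  have hdiff : (∫ x in Ioc 0 R, sin x * x ^ (-β)) - π / (2 * sin (π * (β / 2)) * Gamma β) =
      -E / Gamma β := by
    rw [← mul_div_cancel_left₀ (∫ x in Ioc 0 R, sin x * x ^ (-β)) hΓ.ne', hsplit,
      mul_comm _ (Gamma β), ← div_div]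
    ring
  rw [hdiff, abs_div, abs_neg, abs_of_pos hΓ, div_le_iff₀' hΓ]
  exact abs_integral_rpow_mul_exp_mul_sin_add_cos_div_le h0 hR

lemma cos_mul_pi_div_two_ne_zero {β : ℝ} (h0 : 0 < β) (h2 : β < 2) (h1 : β ≠ 1) :
    cos (π * (β / 2)) ≠ 0 := by
  rw [← cos_pi_div_two]
  intro h
  have hβ :=
    injOn_cos ⟨by positivity, by nlinarith [pi_pos]⟩ ⟨by positivity, by linarith [pi_pos]⟩ h
  exact h1 (by nlinarith [pi_pos])

lemma gamma_one_sub_mul_cos_eq {β : ℝ} (h0 : 0 < β) (h2 : β < 2) (h1 : β ≠ 1) :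
    Gamma (1 - β) * cos (β * π / 2) = π / (2 * sin (π * (β / 2)) * Gamma β) := by
  have hΓ : Gamma β ≠ 0 := (Gamma_pos_of_pos h0).ne'
  have hsin : sin (π * (β / 2)) ≠ 0 :=
    (sin_pos_of_pos_of_lt_pi (by positivity) (by nlinarith [pi_pos])).ne'
  have hcos := cos_mul_pi_div_two_ne_zero h0 h2 h1
  have hrefl := Gamma_mul_Gamma_one_sub β
  rw [show π * β = 2 * (π * (β / 2)) by ring, sin_two_mul] at hrefl
  rw [show β * π / 2 = π * (β / 2) by ring, eq_div_iff (by simp [hsin, hΓ]),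
    show Gamma (1 - β) * cos (π * (β / 2)) * (2 * sin (π * (β / 2)) * Gamma β) =
      Gamma β * Gamma (1 - β) * (2 * sin (π * (β / 2)) * cos (π * (β / 2))) by ring,
    hrefl, div_mul_cancel₀ _ (by simp [hsin, hcos])]

/-- rate of convergence of the truncated sine integral
`∫_0^R sin(x) x^{-β} dx` to `β/(2c_β)`, with the limit itself. -/
theorem sine_integral_rate
    (β cβ : ℝ) (hβ : β ∈ Set.Ioo (0:ℝ) 2)
    (hcβ : β ≠ 1 → cβ = (1/2) * ((1/β) * Real.Gamma (1 - β) * Real.cos (β * π / 2))⁻¹)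
    (hcβ1 : β = 1 → cβ = 1 / π) :
    (∃ C > 0, ∀ R : ℝ, 0 < R →
      |(∫ x in Set.Ioc (0:ℝ) R, Real.sin x * x ^ (-β)) - β / (2 * cβ)| ≤ C * R ^ (-β)) ∧
    Filter.Tendsto (fun R : ℝ => ∫ x in Set.Ioc (0:ℝ) R, Real.sin x * x ^ (-β))
      Filter.atTop (nhds (β / (2 * cβ))) := by
  obtain ⟨h0, h2⟩ := hβ
  have hlimit : β / (2 * cβ) = π / (2 * sin (π * (β / 2)) * Gamma β) := by
    rcases eq_or_ne β 1 with rfl | h1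
    · rw [hcβ1 rfl, show π * (1 / 2) = π / 2 by ring, sin_pi_div_two, Gamma_one]
      field_simp
    · rw [hcβ h1, ← gamma_one_sub_mul_cos_eq h0 h2 h1]
      field_simp
  have hrate := fun R (hR : 0 < R) => abs_integral_sin_mul_rpow_neg_sub_le h0 h2 hR
  rw [hlimit]
  refine ⟨⟨1, one_pos, fun R hR => (hrate R hR).trans_eq (one_mul _).symm⟩, ?_⟩
  refine tendsto_iff_norm_sub_tendsto_zero.2 (squeeze_zero_norm' ?_ (tendsto_rpow_neg_atTop h0))
  filter_upwards [eventually_gt_atTop 0] with R hR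
  simpa using hrate R hR
end

section
/- For every r ∈ (0,1] and every b > 0: ∫_0^b |f(y) − g(y)| dy ≤ ( b^r / (π·r) ) · ∫_0^∞ u^r · |φ'(u) − ψ'(u)| du. -/
/-!
Write `h = φ - ψ`. By evenness, `f y - g y = π⁻¹ ∫_0^∞ cos (u y) h(u) du`, and integrating
by parts against `sin (u y) / y` gives `f y - g y = -(π y)⁻¹ ∫_0^∞ sin (u y) h'(u) du`.
Since `|sin (u y)| ≤ (u y)^r`, this yields
`|f y - g y| ≤ π⁻¹ y^(r-1) ∫_0^∞ u^r |h'(u)| du`, and `∫_0^b y^(r-1) dy = b^r / r`.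
-/

open MeasureTheory Real Set Filter Topology

theorem abs_sin_le_rpow {r x : ℝ} (hr : r ∈ Ioc 0 1) (hx : 0 ≤ x) : |sin x| ≤ x ^ r := by
  rcases le_or_gt x 1 with hx1 | hx1
  · calc |sin x| ≤ x := by simpa [abs_of_nonneg hx] using abs_sin_le_abs (x := x)
      _ = x ^ (1 : ℝ) := (rpow_one x).symm
      _ ≤ x ^ r := rpow_le_rpow_of_exponent_ge' hx hx1 hr.1.le hr.2
  · exact (abs_sin_le_one x).trans (one_le_rpow hx1.le hr.1.le)

theorem abs_sin_mul_mul_le {r u y : ℝ} (hr : r ∈ Ioc 0 1) (hu : 0 ≤ u) (hy : 0 ≤ y) (v : ℝ) :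
    |sin (u * y) * v| ≤ y ^ r * (u ^ r * |v|) := by
  rw [abs_mul, ← mul_assoc, mul_comm (y ^ r), ← mul_rpow hu hy]
  exact mul_le_mul_of_nonneg_right (abs_sin_le_rpow hr (mul_nonneg hu hy)) (abs_nonneg v)

theorem aestronglyMeasurable_of_hasDerivAt {F : Type*} [NormedAddCommGroup F] [NormedSpace ℝ F]
    [CompleteSpace F] {f f' : ℝ → F} {s : Set ℝ} (μ : Measure ℝ) (hs : MeasurableSet s)
    (hf : ∀ x ∈ s, HasDerivAt f (f' x) x) : AEStronglyMeasurable f' (μ.restrict s) :=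
  (aestronglyMeasurable_deriv f _).congr <|
    (ae_restrict_iff' hs).2 <| .of_forall fun x hx => (hf x hx).deriv

/-- Otherwise `‖h x‖ ≥ c / x` near `0`, and `x⁻¹` is not integrable there. -/
theorem frequently_mul_norm_lt_of_integrableOn {E : Type*} [NormedAddCommGroup E] {h : ℝ → E}
    {δ c : ℝ} (hδ : 0 < δ) (hh : IntegrableOn h (Ioo 0 δ)) (hc : 0 < c) :
    ∃ᶠ x in 𝓝[>] 0, x * ‖h x‖ < c := by
  intro hge
  simp only [not_lt] at hge
  obtain ⟨δ', hδ', hsub⟩ := mem_nhdsGT_iff_exists_Ioo_subset.1 (hge.and (Ioo_mem_nhdsGT hδ))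
  have hinv : IntegrableOn (fun x : ℝ => x ^ (-1 : ℝ)) (Ioo 0 δ') := by
    refine ((hh.mono_set fun x hx => (hsub hx).2).norm.const_mul c⁻¹).mono'
      ((continuousOn_id.rpow_const fun x (hx : x ∈ Ioo 0 δ') =>
        .inl hx.1.ne').aestronglyMeasurable measurableSet_Ioo)
      ((ae_restrict_iff' measurableSet_Ioo).2 (.of_forall fun x hx => ?_))
    have hx0 : 0 < x := hx.1
    rw [rpow_neg_one, norm_inv, norm_of_nonneg hx0.le, inv_le_iff_one_le_mul₀ hx0]
    calc (1 : ℝ) = c⁻¹ * c := (inv_mul_cancel₀ hc.ne').symm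
      _ ≤ c⁻¹ * (x * ‖h x‖) := by gcongr; exact (hsub hx).1
      _ = c⁻¹ * ‖h x‖ * x := by ring
  exact lt_irrefl _ ((intervalIntegral.integrableOn_Ioo_rpow_iff hδ').1 hinv)

theorem exists_tendsto_nhdsGT_of_hasDerivAt {E : Type*} [NormedAddCommGroup E]
    [NormedSpace ℝ E] [CompleteSpace E] {f f' : ℝ → E} {a b : ℝ} (hab : a < b)
    (hf : ∀ x ∈ Ioo a b, HasDerivAt f (f' x) x) (hf' : IntegrableOn f' (Ioo a b)) :
    ∃ L, Tendsto f (𝓝[>] a) (𝓝 L) := by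
  obtain ⟨c, hac, hcb⟩ := exists_between hab
  have hf'c : IntegrableOn f' (Icc a c) := by
    rw [integrableOn_Icc_iff_integrableOn_Ioo]
    exact hf'.mono_set (Ioo_subset_Ioo_right hcb.le)
  have hprim : ContinuousWithinAt (fun x => ∫ t in x..c, f' t) (Ioi a) a := by
    rw [← uIcc_of_le hac.le] at hf'c
    refine (intervalIntegral.continuousOn_primitive_interval_left hf'c a
      left_mem_uIcc).mono_of_mem_nhdsWithin ?_
    rw [uIcc_of_le hac.le]
    exact Icc_mem_nhdsGT hac
  refine ⟨f c - ∫ t in a..c, f' t, (tendsto_const_nhds.sub hprim).congr' ?_⟩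
  filter_upwards [Ioo_mem_nhdsGT hac] with x hx
  rw [intervalIntegral.integral_eq_sub_of_hasDerivAt, sub_sub_cancel]
  · intro t ht
    rw [uIcc_of_le hx.2.le] at ht
    exact hf t ⟨hx.1.trans_le ht.1, ht.2.trans_lt hcb⟩
  · rw [intervalIntegrable_iff_integrableOn_Icc_of_le hx.2.le]
    exact hf'c.mono_set (Icc_subset_Icc_left hx.1.le)

theorem MeasureTheory.Integrable.cos_mul_mul {μ : Measure ℝ} {h : ℝ → ℝ} (hh : Integrable h μ)
    (y : ℝ) :
    Integrable (fun u => cos (u * y) * h u) μ :=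
  hh.bdd_mul (c := 1) (by fun_prop) (.of_forall fun u => by simpa using abs_cos_le_one (u * y))

/-- The boundary term `sin (u y) / y * h u` has a limit at `0⁺` because its derivative is
integrable there; that limit vanishes because `|sin (u y) / y * h u| ≤ u |h u|` and `h` is
integrable near `0`. -/
theorem integral_Ioi_cos_mul_mul_eq {h h' : ℝ → ℝ} {y : ℝ} (hy : 0 < y)
    (hd : ∀ u ∈ Ioi 0, HasDerivAt h (h' u) u) (hh : IntegrableOn h (Ioi 0))
    (hS : IntegrableOn (fun u => sin (u * y) * h' u) (Ioi 0)) (h_top : Tendsto h atTop (𝓝 0)) :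
    ∫ u in Ioi 0, cos (u * y) * h u = -(y⁻¹ * ∫ u in Ioi 0, sin (u * y) * h' u) := by
  set s : ℝ → ℝ := fun u => sin (u * y) / y
  have hs : ∀ u, HasDerivAt s (cos (u * y)) u := fun u => by
    simpa [hy.ne'] using ((hasDerivAt_mul_const y).sin).div_const y
  have hsh' : IntegrableOn (s * h') (Ioi 0) := by
    refine IntegrableOn.congr_fun (hS.const_mul y⁻¹) (fun u _ => ?_) measurableSet_Ioi
    simp only [s, Pi.mul_apply]
    ring
  have hcos : IntegrableOn (fun u => cos (u * y) * h u) (Ioi 0) := Integrable.cos_mul_mul hh y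
  have hsh_abs : ∀ u, |s u * h u| = |sin (u * y)| / y * |h u| := fun u => by
    rw [abs_mul, abs_div, abs_of_pos hy]
  have hsh_le_inv : ∀ u, |s u * h u| ≤ y⁻¹ * |h u| := fun u => by
    rw [hsh_abs, div_eq_inv_mul]
    gcongr
    exact mul_le_of_le_one_right (inv_nonneg.2 hy.le) (abs_sin_le_one _)
  have hsh_le_mul : ∀ u, 0 ≤ u → |s u * h u| ≤ u * |h u| := fun u hu => by
    rw [hsh_abs]
    gcongr
    rw [div_le_iff₀ hy]
    simpa [abs_of_nonneg (mul_nonneg hu hy.le)] using abs_sin_le_abs (x := u * y)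
  obtain ⟨L, hL⟩ := exists_tendsto_nhdsGT_of_hasDerivAt one_pos
    (fun u hu => (hs u).mul (hd u hu.1)) ((hcos.add hsh').mono_set Ioo_subset_Ioi_self)
  have hL0 : L = 0 := by
    by_contra hL0
    have hL0 : 0 < |L| := abs_pos.2 hL0
    have hbig : ∀ᶠ u in 𝓝[>] 0, |L| / 2 < |s u * h u| :=
      hL.abs.eventually (lt_mem_nhds (half_lt_self hL0))
    obtain ⟨u, hsmall, hbig, hu⟩ := ((frequently_mul_norm_lt_of_integrableOn one_pos
      (hh.mono_set Ioo_subset_Ioi_self) (half_pos hL0)).and_eventually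
      (hbig.and self_mem_nhdsWithin)).exists
    rw [norm_eq_abs] at hsmall
    linarith [hsh_le_mul u (le_of_lt hu)]
  have h_infty : Tendsto (s * h) atTop (𝓝 0) :=
    squeeze_zero_norm hsh_le_inv (by simpa using h_top.abs.const_mul y⁻¹)
  have hibp := integral_Ioi_mul_deriv_eq_deriv_mul (fun u _ => hs u) hd hsh' hcos (hL0 ▸ hL) h_infty
  have hsh'_eq : ∫ u in Ioi 0, s u * h' u = y⁻¹ * ∫ u in Ioi 0, sin (u * y) * h' u := by
    rw [← integral_const_mul]
    congr 1 with u
    simp only [s]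
    ring
  linarith

section WeightedDerivative

variable {r y : ℝ} {h' : ℝ → ℝ}

theorem integrableOn_sin_mul_mul (hr : r ∈ Ioc 0 1) (hy : 0 ≤ y)
    (hm : AEStronglyMeasurable h' (volume.restrict (Ioi 0)))
    (hw : IntegrableOn (fun u => u ^ r * |h' u|) (Ioi 0)) :
    IntegrableOn (fun u => sin (u * y) * h' u) (Ioi 0) :=
  (hw.const_mul (y ^ r)).mono'
    ((by fun_prop : Continuous fun u => sin (u * y)).aestronglyMeasurable.mul hm)
    ((ae_restrict_iff' measurableSet_Ioi).2 (.of_forall fun u hu =>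
      abs_sin_mul_mul_le hr (le_of_lt hu) hy _))

theorem abs_integral_sin_mul_mul_le (hr : r ∈ Ioc 0 1) (hy : 0 ≤ y)
    (hw : IntegrableOn (fun u => u ^ r * |h' u|) (Ioi 0)) :
    |∫ u in Ioi 0, sin (u * y) * h' u| ≤ y ^ r * ∫ u in Ioi 0, u ^ r * |h' u| := by
  rw [← integral_const_mul, ← norm_eq_abs]
  refine norm_integral_le_of_norm_le (hw.const_mul _)
    ((ae_restrict_iff' measurableSet_Ioi).2 (.of_forall fun u hu => ?_))
  exact abs_sin_mul_mul_le hr (le_of_lt hu) hy _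

theorem abs_integral_Ioi_cos_mul_mul_le {h : ℝ → ℝ} (hr : r ∈ Ioc 0 1) (hy : 0 < y)
    (hd : ∀ u ∈ Ioi 0, HasDerivAt h (h' u) u) (hh : IntegrableOn h (Ioi 0))
    (hw : IntegrableOn (fun u => u ^ r * |h' u|) (Ioi 0)) (h_top : Tendsto h atTop (𝓝 0)) :
    |∫ u in Ioi 0, cos (u * y) * h u| ≤ y ^ (r - 1) * ∫ u in Ioi 0, u ^ r * |h' u| := by
  have hS := integrableOn_sin_mul_mul hr hy.le
    (aestronglyMeasurable_of_hasDerivAt _ measurableSet_Ioi hd) hw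
  rw [integral_Ioi_cos_mul_mul_eq hy hd hh hS h_top, abs_neg, abs_mul, abs_inv, abs_of_pos hy,
    rpow_sub_one hy.ne', div_eq_inv_mul, mul_assoc]
  gcongr
  exact abs_integral_sin_mul_mul_le hr hy.le hw

end WeightedDerivative

theorem re_integral_exp_neg_I_mul_mul {h : ℝ → ℝ} (hh : Integrable h) (y : ℝ) :
    (∫ u : ℝ, Complex.exp (-(Complex.I * u * y)) * (h u : ℂ)).re = ∫ u, cos (u * y) * h u := by
  have he : ∀ u : ℝ, -(Complex.I * u * y) = ((-(u * y) : ℝ) : ℂ) * Complex.I := fun u => by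
    push_cast
    ring
  simp_rw [he]
  have hint : Integrable fun u : ℝ => Complex.exp ((-(u * y) : ℝ) * Complex.I) * (h u : ℂ) :=
    hh.ofReal.bdd_mul (c := 1) (by fun_prop) (.of_forall fun u => by
      rw [Complex.norm_exp_ofReal_mul_I])
  rw [← Complex.reCLM_apply, ← Complex.reCLM.integral_comp_comm hint]
  congr 1 with u
  rw [Complex.reCLM_apply, Complex.re_mul_ofReal, Complex.exp_ofReal_mul_I_re, cos_neg]

theorem integral_cos_mul_mul_eq_two_mul_integral_Ioi {h : ℝ → ℝ} (heven : ∀ u, h (-u) = h u)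
    (y : ℝ) : ∫ u, cos (u * y) * h u = 2 * ∫ u in Ioi 0, cos (u * y) * h u := by
  rw [← integral_comp_abs (f := fun u => cos (u * y) * h u)]
  congr 1 with u
  rcases abs_choice u with hu | hu <;> simp [hu, heven]

theorem integral_Ioc_abs_le_of_le_mul_rpow {k : ℝ → ℝ} {r b C : ℝ} (hr : 0 < r) (hb : 0 ≤ b)
    (hk : ∀ y ∈ Ioc 0 b, |k y| ≤ C * y ^ (r - 1)) : ∫ y in Ioc 0 b, |k y| ≤ C * (b ^ r / r) := by
  have hpow : ∫ y in Ioc 0 b, y ^ (r - 1) = b ^ r / r := by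
    rw [← intervalIntegral.integral_of_le hb, integral_rpow (.inl (by linarith)), sub_add_cancel,
      zero_rpow hr.ne', sub_zero]
  have hint : IntegrableOn (fun y => y ^ (r - 1)) (Ioc 0 b) :=
    (intervalIntegral.intervalIntegrable_rpow' (by linarith)).1
  calc ∫ y in Ioc 0 b, |k y| ≤ ∫ y in Ioc 0 b, C * y ^ (r - 1) :=
        integral_mono_of_nonneg (.of_forall fun _ => abs_nonneg _) (hint.const_mul C)
          ((ae_restrict_iff' measurableSet_Ioc).2 (.of_forall hk))
    _ = C * (b ^ r / r) := by rw [integral_const_mul, hpow]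

theorem fourier_inversion_L1_derivative_bound_general
    (r : ℝ) (hr : r ∈ Set.Ioc (0:ℝ) 1)
    (φ ψ : ℝ → ℝ)
    (hφeven : ∀ u : ℝ, φ (-u) = φ u) (hψeven : ∀ u : ℝ, ψ (-u) = ψ u)
    (hφint : Integrable φ) (hψint : Integrable ψ)
    (φ' ψ' : ℝ → ℝ)
    (hφd : ∀ u : ℝ, 0 < u → HasDerivAt φ (φ' u) u)
    (hψd : ∀ u : ℝ, 0 < u → HasDerivAt ψ (ψ' u) u)
    (hφ0 : Filter.Tendsto φ Filter.atTop (nhds 0))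
    (hψ0 : Filter.Tendsto ψ Filter.atTop (nhds 0))
    (hint : IntegrableOn (fun u : ℝ => u ^ r * (|φ' u| + |ψ' u|)) (Set.Ioi (0:ℝ)))
    (f g : ℝ → ℝ)
    (hf : ∀ y : ℝ, f y
      = (2 * π)⁻¹ * (∫ u : ℝ, Complex.exp (-(Complex.I * (u:ℂ) * (y:ℂ))) * (φ u : ℂ)).re)
    (hg : ∀ y : ℝ, g y
      = (2 * π)⁻¹ * (∫ u : ℝ, Complex.exp (-(Complex.I * (u:ℂ) * (y:ℂ))) * (ψ u : ℂ)).re) :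
    ∀ b : ℝ, 0 < b →
      ∫ y in Set.Ioc (0:ℝ) b, |f y - g y|
        ≤ (b ^ r / (π * r)) * ∫ u in Set.Ioi (0:ℝ), u ^ r * |φ' u - ψ' u| := by
  intro b hb
  have hd : ∀ u ∈ Ioi 0, HasDerivAt (fun u => φ u - ψ u) (φ' u - ψ' u) u := fun u hu =>
    (hφd u hu).sub (hψd u hu)
  have hm := aestronglyMeasurable_of_hasDerivAt volume measurableSet_Ioi hd
  have hw : IntegrableOn (fun u => u ^ r * |φ' u - ψ' u|) (Ioi 0) := by
    refine hint.mono' (by fun_prop)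
      ((ae_restrict_iff' measurableSet_Ioi).2 (.of_forall fun u hu => ?_))
    have hur : 0 ≤ u ^ r := rpow_nonneg (le_of_lt hu) r
    rw [norm_of_nonneg (mul_nonneg hur (abs_nonneg _))]
    exact mul_le_mul_of_nonneg_left (abs_sub _ _) hur
  have hfg : ∀ y, f y - g y = π⁻¹ * ∫ u in Ioi 0, cos (u * y) * (φ u - ψ u) := by
    intro y
    rw [hf, hg, re_integral_exp_neg_I_mul_mul hφint, re_integral_exp_neg_I_mul_mul hψint,
      ← mul_sub, ← integral_sub (hφint.cos_mul_mul y) (hψint.cos_mul_mul y)]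
    simp only [← mul_sub]
    rw [integral_cos_mul_mul_eq_two_mul_integral_Ioi (h := fun u => φ u - ψ u)
      (by simp [hφeven, hψeven])]
    ring
  calc ∫ y in Ioc 0 b, |f y - g y|
      ≤ π⁻¹ * (∫ u in Ioi 0, u ^ r * |φ' u - ψ' u|) * (b ^ r / r) := by
        refine integral_Ioc_abs_le_of_le_mul_rpow hr.1 hb.le fun y hy => ?_
        rw [hfg, abs_mul, abs_inv, abs_of_pos pi_pos, mul_assoc]
        gcongr
        exact (abs_integral_Ioi_cos_mul_mul_le hr hy.1 hd (hφint.sub hψint).integrableOn hw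
          (by simpa using hφ0.sub hψ0)).trans_eq (mul_comm _ _)
    _ = (b ^ r / (π * r)) * ∫ u in Ioi 0, u ^ r * |φ' u - ψ' u| := by ring

/-- local L¹ bound between Fourier inversions of two even integrable functions
in terms of the weighted L¹ distance of their derivatives:
`∫_0^b |f - g| ≤ (b^r/(π r)) ∫_0^∞ u^r |φ' - ψ'| du`. -/
theorem fourier_inversion_L1_derivative_bound
    (r : ℝ) (hr : r ∈ Set.Ioc (0:ℝ) 1)
    (φ ψ : ℝ → ℝ)
    (hφeven : ∀ u : ℝ, φ (-u) = φ u) (hψeven : ∀ u : ℝ, ψ (-u) = ψ u)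
    (hφint : Integrable φ) (hψint : Integrable ψ)
    (φ' ψ' : ℝ → ℝ)
    (hφd : ∀ u : ℝ, 0 < u → HasDerivAt φ (φ' u) u)
    (hψd : ∀ u : ℝ, 0 < u → HasDerivAt ψ (ψ' u) u)
    (hφ'c : ContinuousOn φ' (Set.Ioi (0:ℝ))) (hψ'c : ContinuousOn ψ' (Set.Ioi (0:ℝ)))
    (hφ0 : Filter.Tendsto φ Filter.atTop (nhds 0))
    (hψ0 : Filter.Tendsto ψ Filter.atTop (nhds 0))
    (hint : IntegrableOn (fun u : ℝ => u ^ r * (|φ' u| + |ψ' u|)) (Set.Ioi (0:ℝ)))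
    (f g : ℝ → ℝ)
    (hf : ∀ y : ℝ, f y
      = (2 * π)⁻¹ * (∫ u : ℝ, Complex.exp (-(Complex.I * (u:ℂ) * (y:ℂ))) * (φ u : ℂ)).re)
    (hg : ∀ y : ℝ, g y
      = (2 * π)⁻¹ * (∫ u : ℝ, Complex.exp (-(Complex.I * (u:ℂ) * (y:ℂ))) * (ψ u : ℂ)).re) :
    ∀ b : ℝ, 0 < b →
      ∫ y in Set.Ioc (0:ℝ) b, |f y - g y|
        ≤ (b ^ r / (π * r)) * ∫ u in Set.Ioi (0:ℝ), u ^ r * |φ' u - ψ' u| :=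
  fourier_inversion_L1_derivative_bound_general r hr φ ψ hφeven hψeven hφint hψint φ' ψ' hφd hψd hφ0
    hψ0 hint f g hf hg
end

section
/- (Consistency under possible multi-scaling.) Under the stated setting, any random elements (û_{1,n}, û_{2,n}) ∈ K₁ × K₂ satisfying H_n(û_{1,n}, û_{2,n}) ≥ sup_{(u₁,u₂)∈K₁×K₂} H_n(u₁,u₂) − R_n, where R_n ≥ 0 are random variables with R_n/k_{2,n} → 0 in probability, converge in probability to (u_{1,0}, u_{2,0}). -/
open MeasureTheory Real Set Filter

/-!
Convergence in probability means that every subsequence has a further subsequence converging almost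
surely, so it suffices to argue for a fixed `ω` along a subsequence on which the uniform errors and
`R_n / k_{2,n}` tend to zero. Dividing the near-maximality at `(u_{1,0}, u_{2,0})` by
`k_{1,n}` shows that `û_{1,n}` nearly maximizes `H_{1,n}`, since the second term is bounded and
carries the factor `k_{2,n} / k_{1,n} → 0`; compactness and uniqueness of the maximizer give
`û_{1,n} → u_{1,0}`. Near-maximality in `u₂` alone, divided by `k_{2,n}`, then shows that `û_{2,n}`
nearly maximizes `H_{2,n}(û_{1,n}, ·)`, and these functions converge uniformly to
`H_{2,0}(u_{1,0}, ·)` by uniform continuity of `H_{2,0}` on `K₁ × K₂`.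
-/

open scoped Topology

namespace MeasureTheory

variable {α ι E F : Type*} [MeasurableSpace α] {μ : Measure α} {l : Filter ι}

theorem tendstoInMeasure_zero_iff_of_nonneg {f : ι → α → ℝ} (hf : ∀ i x, 0 ≤ f i x) :
    TendstoInMeasure μ f l 0 ↔ ∀ ε, 0 < ε → Tendsto (fun i => μ {x | ε ≤ f i x}) l (𝓝 0) := by
  have hdist : ∀ i x, dist (f i x) 0 = f i x := fun i x => by
    rw [Real.dist_0_eq_abs, abs_of_nonneg (hf i x)]
  simp only [tendstoInMeasure_iff_dist, Pi.zero_apply, hdist]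

theorem TendstoInMeasure.prodMk [PseudoEMetricSpace E] [PseudoEMetricSpace F]
    {f : ι → α → E} {g : α → E} {f' : ι → α → F} {g' : α → F}
    (hf : TendstoInMeasure μ f l g) (hf' : TendstoInMeasure μ f' l g') :
    TendstoInMeasure μ (fun i x => (f i x, f' i x)) l (fun x => (g x, g' x)) := by
  intro ε hε
  refine tendsto_of_tendsto_of_tendsto_of_le_of_le tendsto_const_nhds
    (by simpa using (hf ε hε).add (hf' ε hε)) (fun _ => zero_le) fun i => ?_
  refine (measure_mono fun x hx => ?_).trans (measure_union_le _ _)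
  simpa [Prod.edist_eq, le_max_iff] using hx

end MeasureTheory

section UniformConvergence

variable {ι E E₁ E₂ β : Type*} {l : Filter ι}

theorem le_ciSup_subtype {K : Set E} {D : E → ℝ} (hD : BddAbove (D '' K)) {u : E} (hu : u ∈ K) :
    D u ≤ ⨆ v : K, D v :=
  le_ciSup (f := fun v : K => D v) (by rwa [← image_eq_range]) ⟨u, hu⟩

theorem le_ciSup_ciSup_subtype {K₁ : Set E₁} {K₂ : Set E₂} {D : E₁ → E₂ → ℝ}
    (hD : BddAbove (Function.uncurry D '' K₁ ×ˢ K₂)) {u₁ : E₁} {u₂ : E₂}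
    (hu₁ : u₁ ∈ K₁) (hu₂ : u₂ ∈ K₂) :
    D u₁ u₂ ≤ ⨆ v₁ : K₁, ⨆ v₂ : K₂, D v₁ v₂ := by
  have : Nonempty K₂ := ⟨⟨u₂, hu₂⟩⟩
  obtain ⟨C, hC⟩ := hD
  have hC' : ∀ v₁ ∈ K₁, ∀ v₂ ∈ K₂, D v₁ v₂ ≤ C := fun v₁ hv₁ v₂ hv₂ =>
    hC ⟨(v₁, v₂), ⟨hv₁, hv₂⟩, rfl⟩
  calc D u₁ u₂ ≤ ⨆ v₂ : K₂, D u₁ v₂ :=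
        le_ciSup_subtype ⟨C, forall_mem_image.2 fun v₂ hv₂ => hC' u₁ hu₁ v₂ hv₂⟩ hu₂
    _ ≤ ⨆ v₁ : K₁, ⨆ v₂ : K₂, D v₁ v₂ :=
        le_ciSup_subtype (D := fun v₁ => ⨆ v₂ : K₂, D v₁ v₂)
          ⟨C, forall_mem_image.2 fun v₁ hv₁ => ciSup_le fun v₂ => hC' v₁ hv₁ v₂ v₂.2⟩ hu₁

theorem tendstoUniformlyOn_of_abs_sub_le {K : Set E} {F : ι → E → ℝ} {f : E → ℝ} {S : ι → ℝ}
    (hS : Tendsto S l (𝓝 0)) (hle : ∀ i, ∀ u ∈ K, |F i u - f u| ≤ S i) :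
    TendstoUniformlyOn F f l K := by
  refine Metric.tendstoUniformlyOn_iff.2 fun ε hε => ?_
  filter_upwards [hS.eventually (gt_mem_nhds hε)] with i hi u hu
  rw [dist_comm, Real.dist_eq]
  exact (hle i u hu).trans_lt hi

theorem tendstoUniformlyOn_of_tendsto_iSup_abs_sub {K : Set E} {F : ι → E → ℝ} {f : E → ℝ}
    (hbdd : ∀ i, BddAbove ((fun u => |F i u - f u|) '' K))
    (h : Tendsto (fun i => ⨆ u : K, |F i u - f u|) l (𝓝 0)) :
    TendstoUniformlyOn F f l K :=
  tendstoUniformlyOn_of_abs_sub_le h fun i _ hu => le_ciSup_subtype (hbdd i) hu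

theorem tendstoUniformlyOn_prod_of_tendsto_iSup_iSup_abs_sub {K₁ : Set E₁} {K₂ : Set E₂}
    {F : ι → E₁ → E₂ → ℝ} {f : E₁ → E₂ → ℝ}
    (hbdd : ∀ i, BddAbove ((fun q : E₁ × E₂ => |F i q.1 q.2 - f q.1 q.2|) '' K₁ ×ˢ K₂))
    (h : Tendsto (fun i => ⨆ u₁ : K₁, ⨆ u₂ : K₂, |F i u₁ u₂ - f u₁ u₂|) l (𝓝 0)) :
    TendstoUniformlyOn (fun i q => F i q.1 q.2) (fun q => f q.1 q.2) l (K₁ ×ˢ K₂) :=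
  tendstoUniformlyOn_of_abs_sub_le h fun i _ hq =>
    le_ciSup_ciSup_subtype (D := fun u₁ u₂ => |F i u₁ u₂ - f u₁ u₂|) (hbdd i) hq.1 hq.2

theorem TendstoUniformlyOn.exists_eventually_norm_le [TopologicalSpace E]
    [SeminormedAddCommGroup β] {K : Set E} {F : ι → E → β} {f : E → β}
    (hF : TendstoUniformlyOn F f l K) (hK : IsCompact K) (hf : ContinuousOn f K) :
    ∃ C, ∀ᶠ i in l, ∀ u ∈ K, ‖F i u‖ ≤ C := by
  obtain ⟨M, hM⟩ := hK.exists_bound_of_continuousOn hf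
  refine ⟨M + 1, ?_⟩
  filter_upwards [Metric.tendstoUniformlyOn_iff.1 hF 1 one_pos] with i hi u hu
  calc ‖F i u‖ ≤ ‖f u‖ + ‖f u - F i u‖ := norm_le_norm_add_norm_sub _ _
    _ ≤ M + 1 := add_le_add (hM u hu) (by rw [← dist_eq_norm]; exact (hi u hu).le)

theorem TendstoUniformlyOn.comp_tendsto_fst [UniformSpace E₁] [UniformSpace E₂]
    [PseudoMetricSpace β] {K₁ : Set E₁} {K₂ : Set E₂} {G : ι → E₁ × E₂ → β} {g : E₁ × E₂ → β}
    (hG : TendstoUniformlyOn G g l (K₁ ×ˢ K₂)) (hg : UniformContinuousOn g (K₁ ×ˢ K₂))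
    {u₁ : E₁} (hu₁ : u₁ ∈ K₁) {x : ι → E₁} (hx : Tendsto x l (𝓝 u₁)) (hxK : ∀ i, x i ∈ K₁) :
    TendstoUniformlyOn (fun i v => G i (x i, v)) (fun v => g (u₁, v)) l K₂ := by
  have hg₁ := Metric.tendstoUniformlyOn_iff.1
    (hg.tendstoUniformlyOn (F := fun a b => g (a, b)) hu₁)
  have hx' : Tendsto x l (𝓝[K₁] u₁) := tendsto_nhdsWithin_iff.2 ⟨hx, .of_forall hxK⟩
  refine Metric.tendstoUniformlyOn_iff.2 fun ε hε => ?_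
  filter_upwards [hx'.eventually (hg₁ (ε / 2) (half_pos hε)),
    Metric.tendstoUniformlyOn_iff.1 hG (ε / 2) (half_pos hε)] with i h₁ h₂ v hv
  calc dist (g (u₁, v)) (G i (x i, v))
      ≤ dist (g (u₁, v)) (g (x i, v)) + dist (g (x i, v)) (G i (x i, v)) := dist_triangle _ _ _
    _ < ε / 2 + ε / 2 := add_lt_add (h₁ v hv) (h₂ _ ⟨hxK i, hv⟩)
    _ = ε := add_halves ε

end UniformConvergence

section NearMaximizers

variable {ι E E₁ E₂ : Type*} {l : Filter ι}

theorem IsCompact.tendsto_of_unique_max [TopologicalSpace E] {K : Set E} (hK : IsCompact K)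
    {f : E → ℝ} (hf : ContinuousOn f K) {u₀ : E} (hmax : ∀ u ∈ K, u ≠ u₀ → f u < f u₀)
    {x : ι → E} (hx : ∀ i, x i ∈ K) (hfx : ∀ ε, 0 < ε → ∀ᶠ i in l, f u₀ - ε < f (x i)) :
    Tendsto x l (𝓝 u₀) := by
  refine fun U hU => show ∀ᶠ i in l, x i ∈ U from ?_
  rcases (K \ interior U).eq_empty_or_nonempty with hempty | hne
  · exact .of_forall fun i => interior_subset (sdiff_eq_empty.1 hempty (hx i))
  obtain ⟨z, hz, hzmax⟩ := (hK.diff isOpen_interior).exists_isMaxOn hne (hf.mono sdiff_subset)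
  have hz₀ : z ≠ u₀ := fun h => hz.2 (h ▸ mem_interior_iff_mem_nhds.2 hU)
  filter_upwards [hfx _ (sub_pos.2 (hmax z hz.1 hz₀))] with i hi
  by_contra hiU
  have : f (x i) ≤ f z := hzmax ⟨hx i, fun h => hiU (interior_subset h)⟩
  linarith

theorem TendstoUniformlyOn.tendsto_of_unique_max [TopologicalSpace E] {K : Set E}
    (hK : IsCompact K) {F : ι → E → ℝ} {f : E → ℝ} (hF : TendstoUniformlyOn F f l K)
    (hf : ContinuousOn f K) {u₀ : E} (hu₀ : u₀ ∈ K) (hmax : ∀ u ∈ K, u ≠ u₀ → f u < f u₀)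
    {x : ι → E} (hx : ∀ i, x i ∈ K) {e : ι → ℝ} (he : Tendsto e l (𝓝 0))
    (hFx : ∀ᶠ i in l, F i u₀ - e i ≤ F i (x i)) :
    Tendsto x l (𝓝 u₀) := by
  refine hK.tendsto_of_unique_max hf hmax hx fun ε hε => ?_
  filter_upwards [Metric.tendstoUniformlyOn_iff.1 hF (ε / 3) (by positivity), hFx,
    he.eventually (gt_mem_nhds (by positivity : (0 : ℝ) < ε / 3))] with i hFi hxi hei
  have h₀ := hFi u₀ hu₀
  have h₁ := hFi (x i) (hx i)
  rw [Real.dist_eq, abs_lt] at h₀ h₁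
  linarith

theorem tendsto_of_multiscale_near_max [UniformSpace E₁] [UniformSpace E₂]
    {K₁ : Set E₁} {K₂ : Set E₂} (hK₁ : IsCompact K₁) (hK₂ : IsCompact K₂)
    {u₁ : E₁} {u₂ : E₂} (hu₁ : u₁ ∈ K₁) (hu₂ : u₂ ∈ K₂)
    {f : E₁ → ℝ} {g : E₁ × E₂ → ℝ} (hf : ContinuousOn f K₁) (hg : ContinuousOn g (K₁ ×ˢ K₂))
    (hfmax : ∀ v ∈ K₁, v ≠ u₁ → f v < f u₁) (hgmax : ∀ v ∈ K₂, v ≠ u₂ → g (u₁, v) < g (u₁, u₂))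
    {F : ι → E₁ → ℝ} {G : ι → E₁ × E₂ → ℝ}
    (hF : TendstoUniformlyOn F f l K₁) (hG : TendstoUniformlyOn G g l (K₁ ×ˢ K₂))
    {k₁ k₂ R : ι → ℝ} (hk₁ : ∀ i, 0 < k₁ i) (hk₂ : ∀ i, 0 < k₂ i)
    (hk : Tendsto (fun i => k₂ i / k₁ i) l (𝓝 0)) (hR : Tendsto (fun i => R i / k₂ i) l (𝓝 0))
    {x : ι → E₁} {y : ι → E₂} (hx : ∀ i, x i ∈ K₁) (hy : ∀ i, y i ∈ K₂)
    (hnear : ∀ i, ∀ v₁ ∈ K₁, ∀ v₂ ∈ K₂,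
      k₁ i * F i v₁ + k₂ i * G i (v₁, v₂) - R i ≤ k₁ i * F i (x i) + k₂ i * G i (x i, y i)) :
    Tendsto x l (𝓝 u₁) ∧ Tendsto y l (𝓝 u₂) := by
  have hx₀ : Tendsto x l (𝓝 u₁) := by
    obtain ⟨C, hC⟩ := hG.exists_eventually_norm_le (hK₁.prod hK₂) hg
    have hbdd : IsBoundedUnder (· ≤ ·) l ((‖·‖) ∘ fun i => G i (x i, y i) - G i (u₁, u₂)) :=
      isBoundedUnder_of_eventually_le (a := C + C) <| hC.mono fun i hi =>
        (norm_sub_le _ _).trans (add_le_add (hi _ ⟨hx i, hy i⟩) (hi _ ⟨hu₁, hu₂⟩))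
    refine hF.tendsto_of_unique_max hK₁ hf hu₁ hfmax hx
      (e := fun i => k₂ i / k₁ i * (G i (x i, y i) - G i (u₁, u₂)) + k₂ i / k₁ i * (R i / k₂ i))
      (by simpa using (hk.zero_mul_isBoundedUnder_le hbdd).add (hk.mul hR)) (.of_forall fun i => ?_)
    have h := hnear i u₁ hu₁ u₂ hu₂
    have hk₁i := hk₁ i
    have hk₂i := hk₂ i
    field_simp
    linarith
  have hgu₁ : ContinuousOn (fun v => g (u₁, v)) K₂ :=
    hg.comp (Continuous.prodMk_right u₁).continuousOn fun v hv => ⟨hu₁, hv⟩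
  have hG₁ := hG.comp_tendsto_fst ((hK₁.prod hK₂).uniformContinuousOn_of_continuous hg) hu₁ hx₀ hx
  refine ⟨hx₀, hG₁.tendsto_of_unique_max hK₂ hgu₁ hu₂ hgmax hy hR (.of_forall fun i => ?_)⟩
  have h := hnear i (x i) (hx i) u₂ hu₂
  have : G i (x i, u₂) - G i (x i, y i) ≤ R i / k₂ i := by
    rw [le_div_iff₀ (hk₂ i)]
    linarith
  linarith

end NearMaximizers
/-- consistency under possible multi-scaling: near-maximizers of the
two-scale contrast `H_n(u₁,u₂) = k_{1,n} H_{1,n}(u₁) + k_{2,n} H_{2,n}(u₁,u₂)` converge in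
probability to `(u_{1,0},u_{2,0})`. -/
theorem multiscale_consistency
    {Ω : Type*} [MeasurableSpace Ω] (P : Measure Ω) [IsProbabilityMeasure P]
    (p₁ p₂ : ℕ)
    (K₁ : Set (EuclideanSpace ℝ (Fin p₁))) (K₂ : Set (EuclideanSpace ℝ (Fin p₂)))
    (hK₁ : IsCompact K₁) (hK₂ : IsCompact K₂)
    (u₁0 : EuclideanSpace ℝ (Fin p₁)) (u₂0 : EuclideanSpace ℝ (Fin p₂))
    (hu0 : (u₁0, u₂0) ∈ interior (K₁ ×ˢ K₂))
    (k1 k2 : ℕ → ℝ) (hk1 : ∀ n, 0 < k1 n) (hk2 : ∀ n, 0 < k2 n)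
    (hk : Filter.Tendsto (fun n => k2 n / k1 n) Filter.atTop (nhds 0))
    (H1n : ℕ → Ω → EuclideanSpace ℝ (Fin p₁) → ℝ)
    (H2n : ℕ → Ω → EuclideanSpace ℝ (Fin p₁) → EuclideanSpace ℝ (Fin p₂) → ℝ)
    (H10 : Ω → EuclideanSpace ℝ (Fin p₁) → ℝ)
    (H20 : Ω → EuclideanSpace ℝ (Fin p₁) → EuclideanSpace ℝ (Fin p₂) → ℝ)
    (hc1 : ∀ n ω, ContinuousOn (H1n n ω) K₁)
    (hc2 : ∀ n ω, ContinuousOn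
      (fun q : EuclideanSpace ℝ (Fin p₁) × EuclideanSpace ℝ (Fin p₂) => H2n n ω q.1 q.2)
      (K₁ ×ˢ K₂))
    (hc10 : ∀ ω, ContinuousOn (H10 ω) K₁)
    (hc20 : ∀ ω, ContinuousOn
      (fun q : EuclideanSpace ℝ (Fin p₁) × EuclideanSpace ℝ (Fin p₂) => H20 ω q.1 q.2)
      (K₁ ×ˢ K₂))
    (hconv1 : ∀ ε : ℝ, 0 < ε → Filter.Tendsto
      (fun n => P {ω | ε ≤ ⨆ u₁ : K₁, |H1n n ω ↑u₁ - H10 ω ↑u₁|})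
      Filter.atTop (nhds 0))
    (hconv2 : ∀ ε : ℝ, 0 < ε → Filter.Tendsto
      (fun n => P {ω | ε ≤ ⨆ u₁ : K₁, ⨆ u₂ : K₂, |H2n n ω ↑u₁ ↑u₂ - H20 ω ↑u₁ ↑u₂|})
      Filter.atTop (nhds 0))
    (hmax : ∀ᵐ ω ∂P,
      (∀ u₁ ∈ K₁, u₁ ≠ u₁0 → H10 ω u₁ < H10 ω u₁0) ∧
      (∀ u₂ ∈ K₂, u₂ ≠ u₂0 → H20 ω u₁0 u₂ < H20 ω u₁0 u₂0))
    (uhat₁ : ℕ → Ω → EuclideanSpace ℝ (Fin p₁)) (uhat₂ : ℕ → Ω → EuclideanSpace ℝ (Fin p₂))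
    (hmeas₁ : ∀ n, Measurable (uhat₁ n)) (hmeas₂ : ∀ n, Measurable (uhat₂ n))
    (hmem : ∀ n ω, uhat₁ n ω ∈ K₁ ∧ uhat₂ n ω ∈ K₂)
    (R : ℕ → Ω → ℝ) (hR : ∀ n ω, 0 ≤ R n ω)
    (hRconv : ∀ ε : ℝ, 0 < ε → Filter.Tendsto
      (fun n => P {ω | ε ≤ R n ω / k2 n}) Filter.atTop (nhds 0))
    (hnearmax : ∀ n ω, ∀ u₁ ∈ K₁, ∀ u₂ ∈ K₂,
      k1 n * H1n n ω u₁ + k2 n * H2n n ω u₁ u₂ - R n ω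
        ≤ k1 n * H1n n ω (uhat₁ n ω) + k2 n * H2n n ω (uhat₁ n ω) (uhat₂ n ω)) :
    ∀ ε : ℝ, 0 < ε → Filter.Tendsto
      (fun n => P {ω | ε ≤ dist (uhat₁ n ω) u₁0 + dist (uhat₂ n ω) u₂0})
      Filter.atTop (nhds 0) := by
  obtain ⟨h₁₀, h₂₀⟩ : (u₁0, u₂0) ∈ K₁ ×ˢ K₂ := interior_subset hu0
  have hS₁ := (tendstoInMeasure_zero_iff_of_nonneg (μ := P) fun n ω =>
    Real.iSup_nonneg fun u₁ : K₁ => abs_nonneg (H1n n ω u₁ - H10 ω u₁)).2 hconv1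
  have hS₂ := (tendstoInMeasure_zero_iff_of_nonneg (μ := P) fun n ω =>
    Real.iSup_nonneg fun u₁ : K₁ => Real.iSup_nonneg fun u₂ : K₂ =>
      abs_nonneg (H2n n ω u₁ u₂ - H20 ω u₁ u₂)).2 hconv2
  have hr := (tendstoInMeasure_zero_iff_of_nonneg (μ := P) fun n ω =>
    div_nonneg (hR n ω) (hk2 n).le).2 hRconv
  refine (tendstoInMeasure_zero_iff_of_nonneg fun n ω => by positivity).1 ?_
  refine (exists_seq_tendstoInMeasure_atTop_iff fun n =>
    (((measurable_id.dist measurable_const).comp (hmeas₁ n)).add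
      ((measurable_id.dist measurable_const).comp (hmeas₂ n))).aestronglyMeasurable).2
    fun ns hns => ?_
  obtain ⟨ms, hms, hae⟩ :=
    ((hS₁.prodMk (hS₂.prodMk hr)).comp hns.tendsto_atTop).exists_seq_tendsto_ae
  refine ⟨ms, hms, ?_⟩
  filter_upwards [hae, hmax] with ω hω ⟨hmax₁, hmax₂⟩
  obtain ⟨hx, hy⟩ := tendsto_of_multiscale_near_max hK₁ hK₂ h₁₀ h₂₀ (hc10 ω) (hc20 ω) hmax₁ hmax₂
    (tendstoUniformlyOn_of_tendsto_iSup_abs_sub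
      (fun _ => hK₁.bddAbove_image ((hc1 _ ω).sub (hc10 ω)).abs) hω.fst_nhds)
    (tendstoUniformlyOn_prod_of_tendsto_iSup_iSup_abs_sub
      (fun _ => (hK₁.prod hK₂).bddAbove_image ((hc2 _ ω).sub (hc20 ω)).abs) hω.snd_nhds.fst_nhds)
    (fun _ => hk1 _) (fun _ => hk2 _) (hk.comp (hns.comp hms).tendsto_atTop) hω.snd_nhds.snd_nhds
    (fun _ => (hmem _ ω).1) (fun _ => (hmem _ ω).2) (fun _ => hnearmax _ ω)
  simpa using (tendsto_iff_dist_tendsto_zero.1 hx).add (tendsto_iff_dist_tendsto_zero.1 hy)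
end

section
/- With h = h_n := T/n and t_j := j·h: sup over θ ∈ Θ̄ and t ∈ [0,T] of | n^{−1} · Σ_{j=1}^{⌊t/h⌋} f(X_{t_{j−1}}, θ) − T^{−1} · ∫_0^t f(X_s, θ) ds | converges to 0 in probability as n → ∞. -/
/-!
The argument is pathwise. Fix `ω` and `θ`, put `g s = f (X s ω) θ`, `h = T / n` and let `M` bound
`|g|` on `[0, T]` uniformly in `θ` (càdlàg paths are bounded and `f` is continuous). Replacing
each Riemann-sum node `j h` by the right end `(j + 1) h` of its cell turns the sum into
`∫ g (h ⌈s / h⌉) ds` up to boundary terms, so the error at any `t ≤ T` is at most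
`T⁻¹ (3 h M + ∫₀ᵀ sup_θ |f (X (h ⌈s / h⌉)) θ - f (X s) θ| ds)`.
Rounding up rather than down is what makes `X (h ⌈s / h⌉) → X s` for every `s` by right-continuity
alone; the supremum over the compact `Θ̄` is continuous, so dominated convergence sends this bound
to `0`. The bound is measurable in `ω`, hence converges to `0` in probability, and it dominates the
supremum to be estimated, which need not be measurable.
-/

open MeasureTheory Set Filter Topology

lemma Measurable.intervalIntegrable_of_abs_le {g : ℝ → ℝ} {a b M : ℝ} (hg : Measurable g)
    (hab : a ≤ b) (hgM : ∀ s ∈ Ioc a b, |g s| ≤ M) : IntervalIntegrable g volume a b :=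
  (intervalIntegrable_iff_integrableOn_Ioc_of_le hab).2 <| Measure.integrableOn_of_bounded
    measure_Ioc_lt_top.ne hg.aestronglyMeasurable
    ((ae_restrict_iff' measurableSet_Ioc).2 (ae_of_all _ hgM))

noncomputable def gridCeil (h s : ℝ) : ℝ := h * ⌈s / h⌉

section gridCeil

variable {h s : ℝ}

lemma le_gridCeil (hh : 0 < h) (s : ℝ) : s ≤ gridCeil h s := by
  rw [gridCeil, ← div_le_iff₀' hh]
  exact Int.le_ceil _

lemma gridCeil_lt_add (hh : 0 < h) (s : ℝ) : gridCeil h s < s + h := by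
  rw [gridCeil, ← lt_div_iff₀' hh, add_div, div_self hh.ne']
  exact Int.ceil_lt_add_one _

lemma gridCeil_le_natCast_mul (hh : 0 < h) {m : ℕ} (hs : s ≤ m * h) : gridCeil h s ≤ m * h := by
  rw [gridCeil, mul_comm (m : ℝ)]
  gcongr
  exact_mod_cast Int.ceil_le.2 (by exact_mod_cast (div_le_iff₀ hh).2 hs)

lemma gridCeil_eq_of_mem_Ioc (hh : 0 < h) {j : ℕ} (hs : s ∈ Ioc (j * h) ((j + 1) * h)) :
    gridCeil h s = (j + 1) * h := by
  have : ⌈s / h⌉ = (j : ℤ) + 1 := by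
    rw [Int.ceil_eq_iff]
    push_cast
    constructor
    · rw [add_sub_cancel_right, lt_div_iff₀ hh]; exact hs.1
    · rw [div_le_iff₀ hh]; exact hs.2
  rw [gridCeil, this]
  push_cast
  ring

lemma gridCeil_mem_Icc {T : ℝ} (hT : 0 < T) {n : ℕ} (hn : n ≠ 0) (hs : s ∈ Icc 0 T) :
    gridCeil (T / n) s ∈ Icc 0 T := by
  have hh : 0 < T / n := by positivity
  refine ⟨hs.1.trans (le_gridCeil hh s), ?_⟩
  have hnT : (n : ℝ) * (T / n) = T := by field_simp
  have := gridCeil_le_natCast_mul hh (m := n) (s := s) (by rw [hnT]; exact hs.2)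
  rwa [hnT] at this

lemma measurable_gridCeil (h : ℝ) : Measurable (gridCeil h) :=
  measurable_const.mul
    (measurable_from_top.comp (Int.measurable_ceil.comp (measurable_id.div_const h)))

lemma tendsto_gridCeil {c : ℝ} (hc : 0 < c) (s : ℝ) :
    Tendsto (fun n : ℕ => gridCeil (c / n) s) atTop (𝓝[≥] s) := by
  have hpos : ∀ᶠ n : ℕ in atTop, 0 < c / n :=
    (eventually_gt_atTop 0).mono fun n hn => by positivity
  refine tendsto_nhdsWithin_iff.2 ⟨?_, hpos.mono fun n hn => le_gridCeil hn s⟩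
  have hup : Tendsto (fun n : ℕ => s + c / n) atTop (𝓝 s) := by
    simpa using tendsto_const_nhds.add (tendsto_const_div_atTop_nhds_zero_nat c)
  exact tendsto_of_tendsto_of_tendsto_of_le_of_le' tendsto_const_nhds hup
    (hpos.mono fun n hn => le_gridCeil hn s) (hpos.mono fun n hn => (gridCeil_lt_add hn s).le)

lemma integral_comp_gridCeil (g : ℝ → ℝ) (hh : 0 < h) (m : ℕ) :
    ∫ s in (0 : ℝ)..m * h, g (gridCeil h s) = h * ∑ j ∈ Finset.range m, g ((j + 1) * h) := by
  have hpiece : ∀ j : ℕ, EqOn (fun s => g (gridCeil h s)) (fun _ => g ((j + 1) * h))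
      (uIoc ((j : ℝ) * h) ((j + 1 : ℕ) * h)) := fun j s hs => by
    rw [uIoc_of_le (by gcongr; simp), Nat.cast_succ] at hs
    simp only [gridCeil_eq_of_mem_Ioc hh hs]
  have hint := intervalIntegral.sum_integral_adjacent_intervals (μ := volume)
    (a := fun j : ℕ => (j : ℝ) * h) (n := m) (f := fun s => g (gridCeil h s))
    fun j _ => (intervalIntegrable_congr (hpiece j)).2 intervalIntegrable_const
  simp only [Nat.cast_zero, zero_mul] at hint
  rw [← hint, Finset.mul_sum]
  refine Finset.sum_congr rfl fun j _ => ?_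
  rw [intervalIntegral.integral_congr_ae (ae_of_all _ (hpiece j)), intervalIntegral.integral_const,
    smul_eq_mul, Nat.cast_succ]
  ring

lemma mul_sum_eq_integral_comp_gridCeil (g : ℝ → ℝ) (hh : 0 < h) (m : ℕ) :
    h * ∑ j ∈ Finset.range m, g (j * h)
      = h * g 0 - h * g (m * h) + ∫ s in (0 : ℝ)..m * h, g (gridCeil h s) := by
  have := Finset.sum_range_sub' (fun j : ℕ => g (j * h)) m
  simp only [Nat.cast_zero, zero_mul, Nat.cast_succ, Finset.sum_sub_distrib] at this
  rw [integral_comp_gridCeil g hh, ← mul_sub, ← mul_add, ← this]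
  ring

lemma abs_mul_sum_sub_integral_le {g : ℝ → ℝ} {t M : ℝ} (hh : 0 < h) (ht : 0 ≤ t)
    (hg : Measurable g) (hgM : ∀ s ∈ Icc 0 t, |g s| ≤ M) :
    |h * ∑ j ∈ Finset.range ⌊t / h⌋₊, g (j * h) - ∫ s in (0 : ℝ)..t, g s|
      ≤ 3 * h * M + ∫ s in (0 : ℝ)..⌊t / h⌋₊ * h, |g (gridCeil h s) - g s| := by
  set m := ⌊t / h⌋₊
  have hm0 : 0 ≤ (m : ℝ) * h := by positivity
  have hmt : (m : ℝ) * h ≤ t := (le_div_iff₀ hh).1 (Nat.floor_le (div_nonneg ht hh.le))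
  have htm : t - m * h ≤ h := by
    have := (Nat.lt_floor_add_one (t / h)).le
    rw [div_le_iff₀ hh] at this
    linarith
  have hgi : ∀ {a b}, 0 ≤ a → a ≤ b → b ≤ t → IntervalIntegrable g volume a b :=
    fun ha hab hb => hg.intervalIntegrable_of_abs_le hab fun s hs =>
      hgM s ⟨ha.trans hs.1.le, hs.2.trans hb⟩
  have hci : IntervalIntegrable (fun s => g (gridCeil h s)) volume 0 (m * h) :=
    (hg.comp (measurable_gridCeil h)).intervalIntegrable_of_abs_le hm0 fun s hs =>
      hgM _ ⟨hs.1.le.trans (le_gridCeil hh s), (gridCeil_le_natCast_mul hh hs.2).trans hmt⟩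
  have hsplit : ∫ s in (0 : ℝ)..t, g s = (∫ s in (0 : ℝ)..m * h, g s) + ∫ s in m * h..t, g s :=
    (intervalIntegral.integral_add_adjacent_intervals (hgi le_rfl hm0 hmt)
      (hgi hm0 hmt le_rfl)).symm
  have hdiff : (∫ s in (0 : ℝ)..m * h, g (gridCeil h s)) - ∫ s in (0 : ℝ)..m * h, g s
      = ∫ s in (0 : ℝ)..m * h, (g (gridCeil h s) - g s) :=
    (intervalIntegral.integral_sub hci (hgi le_rfl hm0 hmt)).symm
  have hnode : ∀ s ∈ Icc 0 t, |h * g s| ≤ h * M := fun s hs => by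
    rw [abs_mul, abs_of_pos hh]
    exact mul_le_mul_of_nonneg_left (hgM s hs) hh.le
  have htail : |∫ s in m * h..t, g s| ≤ h * M := by
    have := intervalIntegral.norm_integral_le_of_norm_le_const (C := M) (f := g) fun s hs => by
      rw [uIoc_of_le hmt] at hs
      exact hgM s ⟨hm0.trans hs.1.le, hs.2⟩
    rw [Real.norm_eq_abs, abs_of_nonneg (sub_nonneg.2 hmt)] at this
    nlinarith [(abs_nonneg (g 0)).trans (hgM 0 ⟨le_rfl, ht⟩)]
  calc _ = |h * g 0 + -(h * g (m * h)) + (∫ s in (0 : ℝ)..m * h, (g (gridCeil h s) - g s))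
        + -∫ s in m * h..t, g s| := by
        rw [mul_sum_eq_integral_comp_gridCeil g hh, hsplit, ← hdiff]
        ring_nf
    _ ≤ h * M + h * M + (∫ s in (0 : ℝ)..m * h, |g (gridCeil h s) - g s|) + h * M := by
        refine (abs_add_le _ _).trans (add_le_add ((abs_add_three _ _ _).trans ?_) ?_)
        · rw [abs_neg]
          exact add_le_add_three (hnode 0 ⟨le_rfl, ht⟩) (hnode _ ⟨hm0, hmt⟩)
            (intervalIntegral.abs_integral_le_integral_abs hm0)
        · rwa [abs_neg]
    _ = _ := by ring

end gridCeil

section supOverCompact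

variable {α Θ : Type*} [TopologicalSpace Θ] {K : Set Θ} {u : α → Θ → ℝ}

lemma continuous_iSup_of_isCompact [TopologicalSpace α] (hK : IsCompact K)
    (hu : Continuous fun q : α × Θ => u q.1 q.2) : Continuous fun x => ⨆ θ : K, u x θ := by
  simpa only [sSup_image'] using hK.continuous_sSup (f := u) hu

lemma le_iSup_of_isCompact (hK : IsCompact K) (hu : ∀ x, Continuous (u x)) (x : α) {θ : Θ}
    (hθ : θ ∈ K) : u x θ ≤ ⨆ θ : K, u x θ := by
  refine le_ciSup (f := fun θ : K => u x θ) ?_ ⟨θ, hθ⟩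
  simpa only [image_eq_range] using hK.bddAbove_image (hu x).continuousOn

end supOverCompact

noncomputable def supDist {Θ : Type*} (f : ℝ → Θ → ℝ) (K : Set Θ) (x y : ℝ) : ℝ :=
  ⨆ θ : K, |f x θ - f y θ|

noncomputable def riemannBound {Θ : Type*} (f : ℝ → Θ → ℝ) (K : Set Θ) (T M : ℝ) (n : ℕ)
    (x : ℝ → ℝ) : ℝ :=
  T⁻¹ * (3 * (T / n) * M + ∫ s in (0 : ℝ)..T, supDist f K (x (gridCeil (T / n) s)) (x s))

section supDist

variable {Θ : Type*} {f : ℝ → Θ → ℝ} {K : Set Θ}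

lemma supDist_nonneg (x y : ℝ) : 0 ≤ supDist f K x y :=
  Real.iSup_nonneg fun _ => abs_nonneg _

lemma supDist_self (x : ℝ) : supDist f K x x = 0 := by
  simp [supDist]

lemma supDist_le {x y M : ℝ} (hM0 : 0 ≤ M) (hx : ∀ θ ∈ K, |f x θ| ≤ M)
    (hy : ∀ θ ∈ K, |f y θ| ≤ M) : supDist f K x y ≤ 2 * M :=
  Real.iSup_le (fun θ => (abs_sub _ _).trans (by linarith [hx θ θ.2, hy θ θ.2])) (by linarith)

variable [TopologicalSpace Θ]

lemma abs_sub_le_supDist (hfc : Continuous fun q : ℝ × Θ => f q.1 q.2) (hK : IsCompact K)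
    (x y : ℝ) {θ : Θ} (hθ : θ ∈ K) : |f x θ - f y θ| ≤ supDist f K x y :=
  le_iSup_of_isCompact (u := fun (q : ℝ × ℝ) θ => |f q.1 θ - f q.2 θ|) hK (fun q => by fun_prop)
    (x, y) hθ

lemma continuous_supDist (hfc : Continuous fun q : ℝ × Θ => f q.1 q.2) (hK : IsCompact K) :
    Continuous fun q : ℝ × ℝ => supDist f K q.1 q.2 :=
  continuous_iSup_of_isCompact (u := fun (q : ℝ × ℝ) θ => |f q.1 θ - f q.2 θ|) hK (by fun_prop)

end supDist

section riemannBound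

variable {Θ : Type*} {f : ℝ → Θ → ℝ} {K : Set Θ} {T M : ℝ} {n : ℕ} {x : ℝ → ℝ}

lemma measurable_supDist_comp_gridCeil [TopologicalSpace Θ]
    (hfc : Continuous fun q : ℝ × Θ => f q.1 q.2) (hK : IsCompact K) (hx : Measurable x) (h : ℝ) :
    Measurable fun s => supDist f K (x (gridCeil h s)) (x s) :=
  (continuous_supDist hfc hK).measurable.comp ((hx.comp (measurable_gridCeil h)).prodMk hx)

lemma supDist_comp_gridCeil_le (hT : 0 < T) (hn : n ≠ 0) (hM0 : 0 ≤ M)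
    (hM : ∀ s ∈ Icc 0 T, ∀ θ ∈ K, |f (x s) θ| ≤ M) {s : ℝ} (hs : s ∈ Icc 0 T) :
    supDist f K (x (gridCeil (T / n) s)) (x s) ≤ 2 * M :=
  supDist_le hM0 (hM _ (gridCeil_mem_Icc hT hn hs)) (hM s hs)

lemma riemannBound_nonneg (hT : 0 < T) (hM0 : 0 ≤ M) : 0 ≤ riemannBound f K T M n x := by
  have := intervalIntegral.integral_nonneg (μ := volume) hT.le fun s _ =>
    supDist_nonneg (f := f) (K := K) (x (gridCeil (T / n) s)) (x s)
  unfold riemannBound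
  positivity

lemma iSup_abs_riemannSum_sub_integral_le [TopologicalSpace Θ] (hT : 0 < T) (hn : n ≠ 0)
    (hfc : Continuous fun q : ℝ × Θ => f q.1 q.2) (hK : IsCompact K) (hx : Measurable x)
    (hM0 : 0 ≤ M) (hM : ∀ s ∈ Icc 0 T, ∀ θ ∈ K, |f (x s) θ| ≤ M) :
    ⨆ θ : K, ⨆ t : Icc (0 : ℝ) T, |(n : ℝ)⁻¹ * ∑ j ∈ Finset.range ⌊(t : ℝ) / (T / n)⌋₊,
        f (x (j * (T / n))) θ - T⁻¹ * ∫ s in (0 : ℝ)..(t : ℝ), f (x s) θ|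
      ≤ riemannBound f K T M n x := by
  have hB := riemannBound_nonneg (f := f) (K := K) (n := n) (x := x) hT hM0
  refine Real.iSup_le (fun θ => Real.iSup_le (fun t => ?_) hB) hB
  have hh : 0 < T / n := by positivity
  have hnT : (n : ℝ)⁻¹ = T⁻¹ * (T / n) := by field_simp
  rw [hnT, mul_assoc, ← mul_sub, abs_mul, abs_of_pos (inv_pos.2 hT), riemannBound]
  gcongr
  have hfθ : Measurable fun s => f (x s) θ :=
    (hfc.comp (continuous_id.prodMk continuous_const)).measurable.comp hx
  refine (abs_mul_sum_sub_integral_le hh t.2.1 hfθ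
    fun s hs => hM s ⟨hs.1, hs.2.trans t.2.2⟩ θ θ.2).trans ?_
  gcongr 3 * (T / n) * M + ?_
  have hmt : (⌊(t : ℝ) / (T / n)⌋₊ : ℝ) * (T / n) ≤ t :=
    (le_div_iff₀ hh).1 (Nat.floor_le (div_nonneg t.2.1 hh.le))
  have hQ : IntervalIntegrable (fun s => supDist f K (x (gridCeil (T / n) s)) (x s)) volume 0 T :=
    (measurable_supDist_comp_gridCeil hfc hK hx _).intervalIntegrable_of_abs_le hT.le
      fun s hs => by
        rw [abs_of_nonneg (supDist_nonneg _ _)]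
        exact supDist_comp_gridCeil_le hT hn hM0 hM (Ioc_subset_Icc_self hs)
  have hm0 : (0 : ℝ) ≤ ⌊(t : ℝ) / (T / n)⌋₊ * (T / n) := by positivity
  calc _ ≤ ∫ s in (0 : ℝ)..⌊(t : ℝ) / (T / n)⌋₊ * (T / n),
        supDist f K (x (gridCeil (T / n) s)) (x s) := by
        rw [intervalIntegral.integral_of_le hm0, intervalIntegral.integral_of_le hm0]
        exact integral_mono_of_nonneg (ae_of_all _ fun s => abs_nonneg _)
          (hQ.1.mono_set (Ioc_subset_Ioc_right (hmt.trans t.2.2)))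
          (ae_of_all _ fun s => abs_sub_le_supDist hfc hK _ _ θ.2)
    _ ≤ _ := intervalIntegral.integral_mono_interval le_rfl hm0 (hmt.trans t.2.2)
        (ae_of_all _ fun s => supDist_nonneg _ _) hQ

lemma tendsto_riemannBound [TopologicalSpace Θ] (hT : 0 < T)
    (hfc : Continuous fun q : ℝ × Θ => f q.1 q.2) (hK : IsCompact K) (hx : Measurable x)
    (hxr : ∀ s ∈ Ioc 0 T, ContinuousWithinAt x (Ici s) s) (hM0 : 0 ≤ M)
    (hM : ∀ s ∈ Icc 0 T, ∀ θ ∈ K, |f (x s) θ| ≤ M) :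
    Tendsto (fun n => riemannBound f K T M n x) atTop (𝓝 0) := by
  have hint : Tendsto (fun n : ℕ => ∫ s in (0 : ℝ)..T, supDist f K (x (gridCeil (T / n) s)) (x s))
      atTop (𝓝 0) := by
    have := intervalIntegral.tendsto_integral_filter_of_dominated_convergence (μ := volume)
      (a := 0) (b := T) (f := fun _ => 0) (fun _ => 2 * M)
      (Eventually.of_forall fun n =>
        (measurable_supDist_comp_gridCeil hfc hK hx _).aestronglyMeasurable)
      ((eventually_ne_atTop 0).mono fun n hn => ae_of_all _ fun s hs => by
        rw [uIoc_of_le hT.le] at hs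
        rw [Real.norm_eq_abs, abs_of_nonneg (supDist_nonneg _ _)]
        exact supDist_comp_gridCeil_le hT hn hM0 hM (Ioc_subset_Icc_self hs))
      intervalIntegrable_const
      (ae_of_all _ fun s hs => by
        rw [uIoc_of_le hT.le] at hs
        simpa only [supDist_self, Function.comp_def] using
          (continuous_supDist hfc hK).continuousAt.tendsto.comp
            (((hxr s hs).tendsto.comp (tendsto_gridCeil hT s)).prodMk_nhds
              (tendsto_const_nhds (x := x s))))
    simpa using this
  simpa [riemannBound] using
    ((((tendsto_const_div_atTop_nhds_zero_nat T).const_mul 3).mul_const M).add hint).const_mul T⁻¹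

lemma measurable_riemannBound [TopologicalSpace Θ] {Ω : Type*} [MeasurableSpace Ω]
    {X : ℝ → Ω → ℝ} (hX : Measurable fun q : Ω × ℝ => X q.2 q.1) {M : Ω → ℝ} (hM : Measurable M)
    (hfc : Continuous fun q : ℝ × Θ => f q.1 q.2) (hK : IsCompact K) (n : ℕ) :
    Measurable fun ω => riemannBound f K T (M ω) n (fun s => X s ω) := by
  have hQ : Measurable fun q : Ω × ℝ => supDist f K (X (gridCeil (T / n) q.2) q.1) (X q.2 q.1) :=
    (continuous_supDist hfc hK).measurable.comp
      ((hX.comp (measurable_fst.prodMk ((measurable_gridCeil _).comp measurable_snd))).prodMk hX)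
  have hI : Measurable fun ω =>
      ∫ s in (0 : ℝ)..T, supDist f K (X (gridCeil (T / n) s) ω) (X s ω) := by
    simp only [intervalIntegral]
    exact (hQ.stronglyMeasurable.integral_prod_right'.measurable).sub
      hQ.stronglyMeasurable.integral_prod_right'.measurable
  unfold riemannBound
  fun_prop

end riemannBound

lemma measurable_uncurry_of_continuousWithinAt_Ici {Ω E : Type*} [MeasurableSpace Ω]
    [TopologicalSpace E] [TopologicalSpace.PseudoMetrizableSpace E] [MeasurableSpace E]
    [BorelSpace E]
    {X : ℝ → Ω → E} (hX : ∀ t, Measurable (X t))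
    (hright : ∀ ω t, ContinuousWithinAt (fun s => X s ω) (Ici t) t) :
    Measurable fun q : Ω × ℝ => X q.2 q.1 := by
  refine measurable_of_tendsto_metrizable
    (f := fun (k : ℕ) (q : Ω × ℝ) => X (gridCeil (1 / k) q.2) q.1) (fun k => ?_)
    (tendsto_pi_nhds.2 fun q => (hright q.1 q.2).tendsto.comp (tendsto_gridCeil one_pos q.2))
  have : Measurable fun q : Ω × ℤ => X (1 / k * q.2) q.1 :=
    measurable_from_prod_countable_left fun z => hX (1 / k * z)
  exact this.comp (measurable_fst.prodMk (Int.measurable_ceil.comp (measurable_snd.div_const _)))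

lemma isBounded_image_Icc_of_continuousWithinAt_Ici {E : Type*} [PseudoMetricSpace E]
    {g : ℝ → E} {a b : ℝ} (hright : ∀ t ∈ Icc a b, ContinuousWithinAt g (Ici t) t)
    (hleft : ∀ t ∈ Ioc a b, ∃ l, Tendsto g (𝓝[<] t) (𝓝 l)) :
    Bornology.IsBounded (g '' Icc a b) := by
  have hloc : ∀ {l : Filter ℝ} {c : E}, Tendsto g l (𝓝 c) →
      ∃ u ∈ l, Bornology.IsBounded (g '' u) :=
    fun hc => ⟨_, hc (Metric.ball_mem_nhds _ one_pos),
      Metric.isBounded_ball.subset (image_preimage_subset _ _)⟩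
  refine isCompact_Icc.induction_on (p := fun s => Bornology.IsBounded (g '' s)) (by simp)
    (fun s t hst ht => ht.subset (image_mono hst))
    (fun s t hs ht => by rw [image_union]; exact hs.union ht) fun t ht => ?_
  obtain ⟨u, hu, hbu⟩ := hloc (hright t ht).tendsto
  rcases ht.1.eq_or_lt with rfl | hat
  · exact ⟨u, nhdsWithin_mono _ Icc_subset_Ici_self hu, hbu⟩
  obtain ⟨l, hl⟩ := hleft t ⟨hat, ht.2⟩
  obtain ⟨v, hv, hbv⟩ := hloc hl
  refine ⟨v ∪ u, mem_nhdsWithin_of_mem_nhds ?_, by rw [image_union]; exact hbv.union hbu⟩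
  rw [← nhdsLT_sup_nhdsGE]
  exact ⟨mem_of_superset hv subset_union_left, mem_of_superset hu subset_union_right⟩

lemma iSup_Icc_eq_iSup_rat {g : ℝ → ℝ} {a b : ℝ} (hab : a ≤ b)
    (hright : ∀ t ∈ Icc a b, ContinuousWithinAt g (Ici t) t)
    (hbdd : BddAbove (range fun t : Icc a b => g t)) :
    ⨆ t : Icc a b, g t = ⨆ q : ℚ, g (projIcc a b hab q) := by
  have hbddq : BddAbove (range fun q : ℚ => g (projIcc a b hab q)) :=
    hbdd.mono (range_comp_subset_range (fun q : ℚ => projIcc a b hab q) fun t : Icc a b => g t)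
  have : Nonempty (Icc a b) := ⟨⟨a, left_mem_Icc.2 hab⟩⟩
  refine le_antisymm (ciSup_le fun t => ?_) (ciSup_le fun q => le_ciSup hbdd _)
  obtain ⟨u, -, htu, hu⟩ := Real.exists_seq_rat_strictAnti_tendsto t
  have hproj : Tendsto (fun k => (projIcc a b hab (u k) : ℝ)) atTop (𝓝[≥] (t : ℝ)) := by
    refine tendsto_nhdsWithin_iff.2 ⟨?_, Eventually.of_forall fun k => ?_⟩
    · simpa only [Function.comp_def, projIcc_val] using
        ((continuous_subtype_val.comp (continuous_projIcc (h := hab))).tendsto t).comp hu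
    · simpa using monotone_projIcc hab (htu k).le
  exact le_of_tendsto ((hright t t.2).tendsto.comp hproj)
    (Eventually.of_forall fun k => le_ciSup hbddq (u k))

lemma measurable_iSup_Icc_of_continuousWithinAt_Ici {Ω : Type*} [MeasurableSpace Ω]
    {G : ℝ → Ω → ℝ} {a b : ℝ} (hab : a ≤ b) (hG : ∀ t, Measurable (G t))
    (hright : ∀ ω, ∀ t ∈ Icc a b, ContinuousWithinAt (fun s => G s ω) (Ici t) t)
    (hbdd : ∀ ω, BddAbove (range fun t : Icc a b => G t ω)) :
    Measurable fun ω => ⨆ t : Icc a b, G t ω := by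
  have : (fun ω => ⨆ t : Icc a b, G t ω) = fun ω => ⨆ q : ℚ, G (projIcc a b hab q) ω :=
    funext fun ω => iSup_Icc_eq_iSup_rat hab (hright ω) (hbdd ω)
  rw [this]
  exact .iSup fun q => hG _

lemma exists_measurable_pathwise_bound {Ω Θ : Type*} [MeasurableSpace Ω] [TopologicalSpace Θ]
    {X : ℝ → Ω → ℝ} {T : ℝ} (hT : 0 ≤ T) (hX : ∀ t, Measurable (X t))
    (hright : ∀ ω t, ContinuousWithinAt (fun s => X s ω) (Ici t) t)
    (hleft : ∀ ω, ∀ t ∈ Ioc 0 T, ∃ l, Tendsto (fun s => X s ω) (𝓝[<] t) (𝓝 l))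
    {f : ℝ → Θ → ℝ} (hfc : Continuous fun q : ℝ × Θ => f q.1 q.2) {K : Set Θ}
    (hK : IsCompact K) :
    ∃ M : Ω → ℝ, Measurable M ∧ ∀ ω, 0 ≤ M ω ∧ ∀ s ∈ Icc 0 T, ∀ θ ∈ K, |f (X s ω) θ| ≤ M ω := by
  set F : ℝ → ℝ := fun x => ⨆ θ : K, |f x θ|
  have hF : Continuous F := continuous_iSup_of_isCompact (u := fun x θ => |f x θ|) hK (by fun_prop)
  have hFr : ∀ ω t, ContinuousWithinAt (fun s => F (X s ω)) (Ici t) t := fun ω t =>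
    hF.continuousAt.comp_continuousWithinAt (hright ω t)
  have hbdd : ∀ ω, BddAbove (range fun t : Icc 0 T => F (X t ω)) := fun ω => by
    rw [← image_eq_range (fun s => F (X s ω))]
    refine (isBounded_image_Icc_of_continuousWithinAt_Ici (fun t _ => hFr ω t)
      fun t ht => ?_).bddAbove
    obtain ⟨l, hl⟩ := hleft ω t ht
    exact ⟨F l, (hF.tendsto l).comp hl⟩
  refine ⟨fun ω => ⨆ t : Icc 0 T, F (X t ω), measurable_iSup_Icc_of_continuousWithinAt_Ici hT
    (fun t => hF.measurable.comp (hX t)) (fun ω t _ => hFr ω t) hbdd, fun ω => ⟨?_, ?_⟩⟩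
  · exact (Real.iSup_nonneg fun _ => abs_nonneg _).trans
      (le_ciSup (hbdd ω) ⟨0, left_mem_Icc.2 hT⟩)
  · exact fun s hs θ hθ => (le_iSup_of_isCompact (u := fun x θ => |f x θ|) hK
      (fun x => by fun_prop) (X s ω) hθ).trans (le_ciSup (hbdd ω) ⟨s, hs⟩)

lemma tendsto_measure_le_of_le_of_tendsto_zero {Ω : Type*} [MeasurableSpace Ω] {P : Measure Ω}
    [IsFiniteMeasure P] {E D : ℕ → Ω → ℝ} (hD : ∀ n, AEStronglyMeasurable (D n) P)
    (hlim : ∀ᵐ ω ∂P, Tendsto (fun n => D n ω) atTop (𝓝 0))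
    (hle : ∀ᶠ n in atTop, ∀ ω, E n ω ≤ D n ω) {ε : ℝ} (hε : 0 < ε) :
    Tendsto (fun n => P {ω | ε ≤ E n ω}) atTop (𝓝 0) := by
  have := tendstoInMeasure_iff_dist.1 (tendstoInMeasure_of_tendsto_ae hD hlim) ε hε
  refine tendsto_of_tendsto_of_tendsto_of_le_of_le' tendsto_const_nhds this
    (Eventually.of_forall fun n => zero_le) (hle.mono fun n hn => measure_mono fun ω hω => ?_)
  exact (show ε ≤ E n ω from hω).trans ((hn ω).trans (by simpa using le_abs_self (D n ω)))

theorem uniform_riemann_sum_LLN_general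
    (T : ℝ) (hT : 0 < T)
    {Ω : Type*} [MeasurableSpace Ω] (P : Measure Ω) [IsProbabilityMeasure P]
    (X : ℝ → Ω → ℝ)
    (hXmeas : ∀ t : ℝ, Measurable (X t))
    (hright : ∀ ω : Ω, ∀ t : ℝ,
      ContinuousWithinAt (fun s => X s ω) (Set.Ici t) t)
    (hleftlim : ∀ ω : Ω, ∀ t : ℝ, 0 < t → t ≤ T → ∃ l : ℝ,
      Filter.Tendsto (fun s => X s ω) (nhdsWithin t (Set.Iio t)) (nhds l))
    (p : ℕ) (Θc : Set (Fin p → ℝ)) (hΘc : IsCompact Θc)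
    (f : ℝ → (Fin p → ℝ) → ℝ)
    (hfc : Continuous (fun q : ℝ × (Fin p → ℝ) => f q.1 q.2)) :
    ∀ ε : ℝ, 0 < ε → Filter.Tendsto
      (fun n : ℕ => P {ω | ε ≤ ⨆ θ : Θc, ⨆ t : Set.Icc (0:ℝ) T,
        |(n:ℝ)⁻¹ * ∑ j ∈ Finset.range ⌊(t:ℝ) / (T / (n:ℝ))⌋₊,
            f (X ((j:ℝ) * (T / (n:ℝ))) ω) ↑θ
          - T⁻¹ * ∫ s in (0:ℝ)..(t:ℝ), f (X s ω) ↑θ|})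
      Filter.atTop (nhds 0) := by
  intro ε hε
  have hjoint := measurable_uncurry_of_continuousWithinAt_Ici hXmeas hright
  have hpath : ∀ ω, Measurable fun s => X s ω := fun ω => hjoint.comp measurable_prodMk_left
  obtain ⟨M, hM, hMbound⟩ := exists_measurable_pathwise_bound hT.le hXmeas hright
    (fun ω t ht => hleftlim ω t ht.1 ht.2) hfc hΘc
  refine tendsto_measure_le_of_le_of_tendsto_zero
    (fun n => (measurable_riemannBound hjoint hM hfc hΘc n).aestronglyMeasurable)
    (ae_of_all _ fun ω => tendsto_riemannBound hT hfc hΘc (hpath ω) (fun s _ => hright ω s)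
      (hMbound ω).1 (hMbound ω).2)
    ((eventually_ne_atTop 0).mono fun n hn ω => iSup_abs_riemannSum_sub_integral_le hT hn hfc hΘc
      (hpath ω) (hMbound ω).1 (hMbound ω).2) hε

/-- uniform (in `θ` and `t`) law of large numbers for Riemann-sum
approximations of time averages of a càdlàg process observed at frequency `h = T/n`. -/
theorem uniform_riemann_sum_LLN
    (T : ℝ) (hT : 0 < T)
    {Ω : Type*} [MeasurableSpace Ω] (P : Measure Ω) [IsProbabilityMeasure P]
    (X : ℝ → Ω → ℝ)
    (hXmeas : ∀ t : ℝ, Measurable (X t))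
    (hright : ∀ ω : Ω, ∀ t : ℝ,
      ContinuousWithinAt (fun s => X s ω) (Set.Ici t) t)
    (hleftlim : ∀ ω : Ω, ∀ t : ℝ, 0 < t → t ≤ T → ∃ l : ℝ,
      Filter.Tendsto (fun s => X s ω) (nhdsWithin t (Set.Iio t)) (nhds l))
    (hXmom : ∀ q : ℝ, 1 ≤ q →
      ∫⁻ ω, ENNReal.ofReal (⨆ t : Set.Icc (0:ℝ) T, |X (t:ℝ) ω| ^ q) ∂P < ⊤)
    (C₁ : ℝ)
    (hXincr : ∀ s ∈ Set.Icc (0:ℝ) T, ∀ t ∈ Set.Icc (0:ℝ) T,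
      ∫⁻ ω, ENNReal.ofReal ((X t ω - X s ω) ^ 2) ∂P ≤ ENNReal.ofReal (C₁ * |t - s|))
    (p : ℕ) (Θc : Set (Fin p → ℝ)) (hΘc : IsCompact Θc)
    (f f' : ℝ → (Fin p → ℝ) → ℝ)
    (hfc : Continuous (fun q : ℝ × (Fin p → ℝ) => f q.1 q.2))
    (hfd : ∀ θ ∈ Θc, ∀ x : ℝ, HasDerivAt (fun x' => f x' θ) (f' x θ) x)
    (hf'c : ∀ θ ∈ Θc, Continuous (fun x => f' x θ))
    (C₂ C₃ : ℝ) (hC₂ : 0 < C₂) (hC₃ : 0 < C₃)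
    (hgrowth : ∀ x : ℝ, ∀ θ ∈ Θc, |f x θ| + |f' x θ| ≤ C₂ * (1 + |x| ^ C₃)) :
    ∀ ε : ℝ, 0 < ε → Filter.Tendsto
      (fun n : ℕ => P {ω | ε ≤ ⨆ θ : Θc, ⨆ t : Set.Icc (0:ℝ) T,
        |(n:ℝ)⁻¹ * ∑ j ∈ Finset.range ⌊(t:ℝ) / (T / (n:ℝ))⌋₊,
            f (X ((j:ℝ) * (T / (n:ℝ))) ω) ↑θ
          - T⁻¹ * ∫ s in (0:ℝ)..(t:ℝ), f (X s ω) ↑θ|})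
      Filter.atTop (nhds 0) :=
  uniform_riemann_sum_LLN_general T hT P X hXmeas hright hleftlim p Θc hΘc f hfc
end
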